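/- arXiv:2010.11243 — 5 statements merged into one kernel-verified Lean document; each statement's English description precedes it below -/
import Mathlib

section
/- Let G be a one-sided POSG, π1 ∈ Π1, and ᾱ = (α_{a1,o})_{(a1,o) ∈ A1×O} a vector of linear functions on Δ(S) such that L ≤ α_{a1,o}(b) ≤ U for every (a1,o) ∈ A1×O and every b ∈ Δ(S). Then L ≤ valcomp(π1, ᾱ)(b) ≤ U for every b ∈ Δ(S), and valcomp(π1, ᾱ) is δ-Lipschitz with respect to the ℓ1 metric. -/
open scoped BigOperators

noncomputable section

/-- ℓ1 distance on `S → ℝ`. -/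
def l1dist {S : Type*} [Fintype S] (p q : S → ℝ) : ℝ := ∑ s, |p s - q s|

/-- Evaluation at a belief `b` of the linear function on the simplex with vertex values
`α : S → ℝ`. -/
def lineval {S : Type*} [Fintype S] (α : S → ℝ) (b : S → ℝ) : ℝ := ∑ s, b s * α s

/-- `f` is `k`-Lipschitz with respect to the ℓ1 metric on the probability simplex. -/
def LipOnSimplex {S : Type*} [Fintype S] (k : ℝ) (f : (S → ℝ) → ℝ) : Prop :=
  ∀ p ∈ stdSimplex ℝ S, ∀ q ∈ stdSimplex ℝ S, |f p - f q| ≤ k * l1dist p q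

/-- A one-sided partially observable stochastic game. -/
structure OSPOSG (S A1 A2 O : Type*) [Fintype S] [Fintype A1] [Fintype A2] [Fintype O] where
  /-- transition function: `T s a1 a2 o s'` is the probability of observing `o` and moving
  to `s'` from `s` under actions `a1, a2`. -/
  T : S → A1 → A2 → O → S → ℝ
  T_nonneg : ∀ s a1 a2 o s', 0 ≤ T s a1 a2 o s'
  T_sum : ∀ s a1 a2, ∑ o, ∑ s', T s a1 a2 o s' = 1
  /-- reward function of player 1 -/
  R : S → A1 → A2 → ℝ
  /-- discount factor -/
  γ : ℝ
  γ_pos : 0 < γ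
  γ_lt_one : γ < 1

namespace OSPOSG

variable {S A1 A2 O : Type*} [Fintype S] [Fintype A1] [Fintype A2] [Fintype O]
  [Nonempty S] [Nonempty A1] [Nonempty A2] [Nonempty O]

/-- The minimum reward `r_min`. -/
def rmin (G : OSPOSG S A1 A2 O) : ℝ :=
  Finset.univ.inf' Finset.univ_nonempty fun x : S × A1 × A2 => G.R x.1 x.2.1 x.2.2

/-- The maximum reward `r_max`. -/
def rmax (G : OSPOSG S A1 A2 O) : ℝ :=
  Finset.univ.sup' Finset.univ_nonempty fun x : S × A1 × A2 => G.R x.1 x.2.1 x.2.2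

/-- `L = r_min / (1 - γ)`. -/
def Lval (G : OSPOSG S A1 A2 O) : ℝ := G.rmin / (1 - G.γ)

/-- `U = r_max / (1 - γ)`. -/
def Uval (G : OSPOSG S A1 A2 O) : ℝ := G.rmax / (1 - G.γ)

/-- `δ = (U - L) / 2`. -/
def δval (G : OSPOSG S A1 A2 O) : ℝ := (G.Uval - G.Lval) / 2

/-- The set of stage strategies of player 2. -/
def Pi2 (S A2 : Type*) [Fintype A2] : Set (S → A2 → ℝ) :=
  {π2 | ∀ s, π2 s ∈ stdSimplex ℝ A2}

/-- Vertex values of the value composition `valcomp(π1, ᾱ)`. -/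
def valcompVert (G : OSPOSG S A1 A2 O) (π1 : A1 → ℝ) (αb : A1 → O → S → ℝ) (s : S) : ℝ :=
  Finset.univ.inf' Finset.univ_nonempty fun a2 =>
    ∑ a1, π1 a1 * (G.R s a1 a2 + G.γ * ∑ o, ∑ s', G.T s a1 a2 o s' * αb a1 o s')

/-- The value composition `valcomp(π1, ᾱ)`, a linear function of the belief `b`. -/
def valcomp (G : OSPOSG S A1 A2 O) (π1 : A1 → ℝ) (αb : A1 → O → S → ℝ) (b : S → ℝ) : ℝ :=
  ∑ s, b s * G.valcompVert π1 αb s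

/-- `Pr_{b,π1,π2}[a1, o]`: the probability that player 1 plays `a1` and observes `o`. -/
def Pr (G : OSPOSG S A1 A2 O) (b : S → ℝ) (π1 : A1 → ℝ) (π2 : S → A2 → ℝ)
    (a1 : A1) (o : O) : ℝ :=
  ∑ s, ∑ a2, ∑ s', b s * π1 a1 * π2 s a2 * G.T s a1 a2 o s'

/-- The updated belief `τ(b, a1, π2, o)` of player 1 (junk value `0` if the normalizing
constant vanishes; such terms are always multiplied by a zero probability below). -/
def beliefUpd (G : OSPOSG S A1 A2 O) (b : S → ℝ) (a1 : A1) (π2 : S → A2 → ℝ) (o : O) :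
    S → ℝ := fun s' =>
  (∑ s, ∑ a2, b s * π2 s a2 * G.T s a1 a2 o s') /
    (∑ s'', ∑ s, ∑ a2, b s * π2 s a2 * G.T s a1 a2 o s'')

/-- The stage utility `u^{V,b}(π1, π2)`. -/
def stageU (G : OSPOSG S A1 A2 O) (V : (S → ℝ) → ℝ) (b : S → ℝ)
    (π1 : A1 → ℝ) (π2 : S → A2 → ℝ) : ℝ :=
  (∑ s, ∑ a1, ∑ a2, b s * π1 a1 * π2 s a2 * G.R s a1 a2) +
    G.γ * ∑ a1, ∑ o, G.Pr b π1 π2 a1 o * V (G.beliefUpd b a1 π2 o)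

/-- The minimax (Bellman) operator `[HV](b) = sup_{π1} inf_{π2} u^{V,b}(π1,π2)`. -/
def Hop (G : OSPOSG S A1 A2 O) (V : (S → ℝ) → ℝ) (b : S → ℝ) : ℝ :=
  ⨆ π1 : stdSimplex ℝ A1, ⨅ π2 : Pi2 S A2, G.stageU V b π1.1 π2.1

end OSPOSG

namespace OSPOSG

variable {S A1 A2 O : Type*} [Fintype S] [Fintype A1] [Fintype A2] [Fintype O]
  [Nonempty S] [Nonempty A1] [Nonempty A2] [Nonempty O]

private lemma convex_bound {ι : Type*} [Fintype ι] (w x : ι → ℝ)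
    (hw : ∀ i, 0 ≤ w i) (hs : ∑ i, w i = 1) {L U : ℝ}
    (hx : ∀ i, L ≤ x i ∧ x i ≤ U) :
    L ≤ ∑ i, w i * x i ∧ ∑ i, w i * x i ≤ U := by
  constructor
  · calc L = ∑ i, w i * L := by rw [← Finset.sum_mul, hs, one_mul]
      _ ≤ ∑ i, w i * x i :=
        Finset.sum_le_sum fun i _ => mul_le_mul_of_nonneg_left (hx i).1 (hw i)
  · calc ∑ i, w i * x i ≤ ∑ i, w i * U :=
        Finset.sum_le_sum fun i _ => mul_le_mul_of_nonneg_left (hx i).2 (hw i)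
      _ = U := by rw [← Finset.sum_mul, hs, one_mul]

private lemma valcompVert_mem (G : OSPOSG S A1 A2 O)
    (π1 : A1 → ℝ) (hπ1 : π1 ∈ stdSimplex ℝ A1) (αb : A1 → O → S → ℝ)
    (hα : ∀ a1 o s', G.Lval ≤ αb a1 o s' ∧ αb a1 o s' ≤ G.Uval) (s : S) :
    G.Lval ≤ G.valcompVert π1 αb s ∧ G.valcompVert π1 αb s ≤ G.Uval := by
  have hγ1 : (1 : ℝ) - G.γ > 0 := by linarith [G.γ_lt_one]
  have hL : G.rmin + G.γ * G.Lval = G.Lval := by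
    unfold OSPOSG.Lval; field_simp; ring
  have hU : G.rmax + G.γ * G.Uval = G.Uval := by
    unfold OSPOSG.Uval; field_simp; ring
  have key : ∀ a2 : A2, G.Lval ≤
      (∑ a1, π1 a1 * (G.R s a1 a2 + G.γ * ∑ o, ∑ s', G.T s a1 a2 o s' * αb a1 o s')) ∧
      (∑ a1, π1 a1 * (G.R s a1 a2 + G.γ * ∑ o, ∑ s', G.T s a1 a2 o s' * αb a1 o s'))
        ≤ G.Uval := by
    intro a2
    refine convex_bound π1 _ hπ1.1 hπ1.2 ?_
    intro a1
    have hinner : G.Lval ≤ (∑ o, ∑ s', G.T s a1 a2 o s' * αb a1 o s') ∧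
        (∑ o, ∑ s', G.T s a1 a2 o s' * αb a1 o s') ≤ G.Uval := by
      have h1 : (∑ o, ∑ s', G.T s a1 a2 o s' * αb a1 o s')
          = ∑ p : O × S, G.T s a1 a2 p.1 p.2 * αb a1 p.1 p.2 := by
        rw [Fintype.sum_prod_type]
      have h2 : (∑ p : O × S, G.T s a1 a2 p.1 p.2) = 1 := by
        rw [Fintype.sum_prod_type]; exact G.T_sum s a1 a2
      rw [h1]
      exact convex_bound _ _ (fun p : O × S => G.T_nonneg s a1 a2 p.1 p.2) h2
        (fun p : O × S => hα a1 p.1 p.2)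
    have hR1 : G.rmin ≤ G.R s a1 a2 :=
      Finset.inf'_le (s := Finset.univ) _ (Finset.mem_univ (s, a1, a2))
    have hR2 : G.R s a1 a2 ≤ G.rmax :=
      Finset.le_sup' (s := Finset.univ)
        (fun x : S × A1 × A2 => G.R x.1 x.2.1 x.2.2) (Finset.mem_univ (s, a1, a2))
    constructor
    · nlinarith [hinner.1, G.γ_pos.le]
    · nlinarith [hinner.2, G.γ_pos.le]
  unfold OSPOSG.valcompVert
  constructor
  · exact Finset.le_inf' _ _ fun a2 _ => (key a2).1
  · obtain ⟨a2⟩ := ‹Nonempty A2›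
    exact le_trans (Finset.inf'_le _ (Finset.mem_univ a2)) (key a2).2

/-- If all the linear functions `α_{a1,o}` take values in `[L, U]` on the simplex, then so
does `valcomp(π1, ᾱ)`, and `valcomp(π1, ᾱ)` is `δ`-Lipschitz w.r.t. the ℓ1 metric. -/
theorem valcomp_bounded_lipschitz (G : OSPOSG S A1 A2 O)
    (π1 : A1 → ℝ) (hπ1 : π1 ∈ stdSimplex ℝ A1) (αb : A1 → O → S → ℝ)
    (hα : ∀ a1 o, ∀ b ∈ stdSimplex ℝ S,
      G.Lval ≤ lineval (αb a1 o) b ∧ lineval (αb a1 o) b ≤ G.Uval) :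
    (∀ b ∈ stdSimplex ℝ S,
      G.Lval ≤ G.valcomp π1 αb b ∧ G.valcomp π1 αb b ≤ G.Uval) ∧
    LipOnSimplex G.δval (G.valcomp π1 αb) := by
  classical
  have hαv : ∀ a1 o s', G.Lval ≤ αb a1 o s' ∧ αb a1 o s' ≤ G.Uval := by
    intro a1 o s'
    have hb : (fun t => if t = s' then (1 : ℝ) else 0) ∈ stdSimplex ℝ S := by
      constructor
      · intro t; dsimp; split <;> norm_num
      · simp
    have := hα a1 o _ hb
    simpa [lineval, ite_mul, Finset.sum_ite_eq'] using this
  have hvert := valcompVert_mem G π1 hπ1 αb hαv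
  constructor
  · intro b hb
    exact convex_bound b _ hb.1 hb.2 hvert
  · intro p hp q hq
    set v := G.valcompVert π1 αb with hv
    set c := (G.Lval + G.Uval) / 2 with hc
    have hvd : ∀ s, |v s - c| ≤ G.δval := by
      intro s
      rw [abs_le]
      have h1 := (hvert s).1
      have h2 := (hvert s).2
      unfold OSPOSG.δval
      constructor <;> [linarith; linarith]
    have hdiff : G.valcomp π1 αb p - G.valcomp π1 αb q
        = ∑ s, (p s - q s) * (v s - c) := by
      have hsum : (∑ s, (p s - q s)) = 0 := by
        have := hp.2; have := hq.2
        rw [Finset.sum_sub_distrib]; simp_all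
      rw [show G.valcomp π1 αb p = ∑ s, p s * v s from rfl,
        show G.valcomp π1 αb q = ∑ s, q s * v s from rfl, ← Finset.sum_sub_distrib,
        Finset.sum_congr rfl (fun s _ => show p s * v s - q s * v s
          = (p s - q s) * (v s - c) + (p s - q s) * c by ring),
        Finset.sum_add_distrib, ← Finset.sum_mul, hsum, zero_mul, add_zero]
    rw [hdiff]
    calc |∑ s, (p s - q s) * (v s - c)| ≤ ∑ s, |(p s - q s) * (v s - c)| :=
          Finset.abs_sum_le_sum_abs _ _
      _ = ∑ s, |p s - q s| * |v s - c| := by simp [abs_mul]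
      _ ≤ ∑ s, |p s - q s| * G.δval :=
          Finset.sum_le_sum fun s _ =>
            mul_le_mul_of_nonneg_left (hvd s) (abs_nonneg _)
      _ = G.δval * l1dist p q := by
          rw [l1dist, Finset.mul_sum]
          exact Finset.sum_congr rfl fun s _ => mul_comm _ _

end OSPOSG
end
end

section
/- Let G be a one-sided POSG and Γ a nonempty convex set of linear functions on Δ(S) such that V(b) = sup_{α ∈ Γ} α(b) is finite for every b ∈ Δ(S). Then the function HV, defined by [HV](b) = sup_{π1 ∈ Π1} sup_{ᾱ ∈ Γ^{A1×O}} valcomp(π1, ᾱ)(b), is convex and continuous on Δ(S). Moreover, if every α ∈ Γ takes values in [L, U], then HV is δ-Lipschitz with respect to the ℓ1 metric. -/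
open scoped BigOperators

noncomputable section

section AuxSup

variable {S : Type*} [Fintype S]

lemma lineval_combo (v : S → ℝ) (a b : ℝ) (x y : S → ℝ) :
    lineval v (a • x + b • y) = a * lineval v x + b * lineval v y := by
  simp only [lineval, Pi.add_apply, Pi.smul_apply, smul_eq_mul]
  rw [Finset.mul_sum, Finset.mul_sum, ← Finset.sum_add_distrib]
  exact Finset.sum_congr rfl fun s _ => by ring

lemma lineval_le_of_nonneg (v : S → ℝ) {c : S → ℝ} (hc : ∀ s, 0 ≤ c s) {C : ℝ}
    (hv : ∀ s, v s ≤ C) : lineval v c ≤ C * ∑ s, c s := by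
  rw [Finset.mul_sum]
  refine Finset.sum_le_sum fun s _ => ?_
  rw [mul_comm C (c s)]
  exact mul_le_mul_of_nonneg_left (hv s) (hc s)

theorem supLinear_convex_continuous (K : Set (S → ℝ)) (hK : K.Nonempty) (C : ℝ)
    (hC : ∀ v ∈ K, ∀ s, v s ≤ C) (f : (S → ℝ) → ℝ)
    (hf : ∀ b ∈ stdSimplex ℝ S, f b = sSup ((fun v => lineval v b) '' K)) :
    ConvexOn ℝ (stdSimplex ℝ S) f ∧ ContinuousOn f (stdSimplex ℝ S) := by
  have hBdd : ∀ c : S → ℝ, (∀ s, 0 ≤ c s) → BddAbove ((fun v => lineval v c) '' K) := by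
    intro c hc
    refine ⟨C * ∑ s, c s, ?_⟩
    rintro _ ⟨v, hv, rfl⟩
    exact lineval_le_of_nonneg v hc (hC v hv)
  have hle : ∀ b ∈ stdSimplex ℝ S, ∀ v ∈ K, lineval v b ≤ f b := by
    intro b hb v hv
    rw [hf b hb]
    exact le_csSup (hBdd b hb.1) ⟨v, hv, rfl⟩
  have hconv : ConvexOn ℝ (stdSimplex ℝ S) f := by
    refine ⟨convex_stdSimplex ℝ S, fun p hp q hq a b ha hb hab => ?_⟩
    have hcomb : a • p + b • q ∈ stdSimplex ℝ S := (convex_stdSimplex ℝ S) hp hq ha hb hab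
    rw [hf _ hcomb]
    refine csSup_le (hK.image _) ?_
    rintro _ ⟨v, hv, rfl⟩
    show lineval v (a • p + b • q) ≤ a • f p + b • f q
    rw [lineval_combo]
    have h1 := mul_le_mul_of_nonneg_left (hle p hp v hv) ha
    have h2 := mul_le_mul_of_nonneg_left (hle q hq v hv) hb
    simpa [smul_eq_mul] using add_le_add h1 h2
  refine ⟨hconv, ?_⟩
  intro p hp
  -- projection onto the support of p
  set pr : (S → ℝ) → S → ℝ := fun b s => if 0 < p s then b s else 0 with hpr
  have hpr_combo : ∀ (a b : ℝ) (x y : S → ℝ),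
      pr (a • x + b • y) = a • pr x + b • pr y := by
    intro a b x y
    funext s
    by_cases h : 0 < p s <;> simp [hpr, h]
  have hpr_p : pr p = p := by
    funext s
    by_cases h : 0 < p s
    · simp [hpr, h]
    · simp [hpr, h, (le_antisymm (not_lt.1 h) (hp.1 s)).symm]
  have hpr_nonneg : ∀ (b : S → ℝ), (∀ s, 0 ≤ b s) → ∀ s, 0 ≤ pr b s := by
    intro b hb s
    by_cases h : 0 < p s <;> simp [hpr, h, hb s]
  -- the open convex set
  set Ω : Set (S → ℝ) := {b | ∀ s, 0 < p s → 0 < b s} with hΩ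
  have hpΩ : p ∈ Ω := fun s hs => hs
  have hΩopen : IsOpen Ω := by
    have : Ω = ⋂ s, ⋂ (_ : 0 < p s), {b : S → ℝ | 0 < b s} := by
      ext b; simp [hΩ, Set.mem_iInter]
    rw [this]
    exact isOpen_iInter_of_finite fun s =>
      isOpen_iInter_of_finite fun _ => isOpen_lt continuous_const (continuous_apply s)
  have hΩconv : Convex ℝ Ω := by
    intro x hx y hy a b ha hb hab s hs
    show (0:ℝ) < (a • x + b • y) s
    simp only [Pi.add_apply, Pi.smul_apply, smul_eq_mul]
    rcases ha.lt_or_eq with h | h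
    · exact add_pos_of_pos_of_nonneg (mul_pos h (hx s hs)) (mul_nonneg hb (hy s hs).le)
    · have hb1 : b = 1 := by linarith
      rw [← h, hb1]
      simpa using hy s hs
  -- the comparison function F
  set F : (S → ℝ) → ℝ :=
    fun b => sSup ((fun v => lineval v (pr b)) '' K) + C * ∑ s, (b s - pr b s) with hF
  have hΩnonneg : ∀ b ∈ Ω, ∀ s, 0 ≤ pr b s := by
    intro b hb s
    by_cases h : 0 < p s <;> simp [hpr, h]
    exact (hb s h).le
  have hFconv : ConvexOn ℝ Ω F := by
    refine ⟨hΩconv, fun x hx y hy a b ha hb hab => ?_⟩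
    have hxy : pr (a • x + b • y) = a • pr x + b • pr y := hpr_combo a b x y
    have hGx : ∀ v ∈ K, lineval v (pr x) ≤ sSup ((fun v => lineval v (pr x)) '' K) :=
      fun v hv => le_csSup (hBdd _ (hΩnonneg x hx)) ⟨v, hv, rfl⟩
    have hGy : ∀ v ∈ K, lineval v (pr y) ≤ sSup ((fun v => lineval v (pr y)) '' K) :=
      fun v hv => le_csSup (hBdd _ (hΩnonneg y hy)) ⟨v, hv, rfl⟩
    have hGcomb : sSup ((fun v => lineval v (pr (a • x + b • y))) '' K) ≤
        a * sSup ((fun v => lineval v (pr x)) '' K) +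
          b * sSup ((fun v => lineval v (pr y)) '' K) := by
      refine csSup_le (hK.image _) ?_
      rintro _ ⟨v, hv, rfl⟩
      show lineval v (pr (a • x + b • y)) ≤ _
      rw [hxy, lineval_combo]
      exact add_le_add (mul_le_mul_of_nonneg_left (hGx v hv) ha)
        (mul_le_mul_of_nonneg_left (hGy v hv) hb)
    have hlin : C * ∑ s, ((a • x + b • y) s - pr (a • x + b • y) s) =
        a * (C * ∑ s, (x s - pr x s)) + b * (C * ∑ s, (y s - pr y s)) := by
      rw [hxy]
      simp only [Pi.add_apply, Pi.smul_apply, smul_eq_mul]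
      rw [Finset.mul_sum, Finset.mul_sum, Finset.mul_sum, Finset.mul_sum, Finset.mul_sum,
        ← Finset.sum_add_distrib]
      exact Finset.sum_congr rfl fun s _ => by ring
    simp only [hF, smul_eq_mul]
    rw [hlin]
    linarith [hGcomb]
  have hFp : F p = f p := by
    simp only [hF, hpr_p, hf p hp]
    simp
  have hfleF : ∀ q ∈ stdSimplex ℝ S, f q ≤ F q := by
    intro q hq
    rw [hf q hq]
    refine csSup_le (hK.image _) ?_
    rintro _ ⟨v, hv, rfl⟩
    show lineval v q ≤ F q
    have h1 : lineval v q = lineval v (pr q) + ∑ s, (q s - pr q s) * v s := by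
      simp only [lineval]
      rw [← Finset.sum_add_distrib]
      exact Finset.sum_congr rfl fun s _ => by ring
    have h2 : ∑ s, (q s - pr q s) * v s ≤ C * ∑ s, (q s - pr q s) := by
      rw [Finset.mul_sum]
      refine Finset.sum_le_sum fun s _ => ?_
      have hnn : 0 ≤ q s - pr q s := by
        by_cases h : 0 < p s <;> simp [hpr, h, hq.1 s]
      rw [mul_comm C _]
      exact mul_le_mul_of_nonneg_left (hC v hv s) hnn
    have h3 : lineval v (pr q) ≤ sSup ((fun v => lineval v (pr q)) '' K) :=
      le_csSup (hBdd _ (hpr_nonneg q hq.1)) ⟨v, hv, rfl⟩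
    rw [h1]
    exact add_le_add h3 h2
  have hFcont : ContinuousAt F p :=
    (hFconv.continuousOn hΩopen).continuousAt (hΩopen.mem_nhds hpΩ)
  rw [ContinuousWithinAt]
  refine tendsto_order.2 ⟨fun a ha => ?_, fun a ha => ?_⟩
  · -- lower semicontinuity
    have : a < sSup ((fun v => lineval v p) '' K) := by rwa [← hf p hp]
    obtain ⟨_, ⟨v, hv, rfl⟩, hav⟩ := exists_lt_of_lt_csSup (hK.image _) this
    have hcont : ContinuousAt (lineval v) p := by
      refine Continuous.continuousAt ?_
      unfold lineval
      exact continuous_finset_sum _ fun s _ => (continuous_apply s).mul continuous_const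
    have h1 : ∀ᶠ q in nhds p, a < lineval v q := hcont (Ioi_mem_nhds hav)
    filter_upwards [nhdsWithin_le_nhds h1, self_mem_nhdsWithin] with q hq1 hq2
    exact lt_of_lt_of_le hq1 (hle q hq2 v hv)
  · -- upper semicontinuity via F
    have hFa : ∀ᶠ q in nhds p, F q < a := hFcont (Iio_mem_nhds (by rwa [hFp]))
    filter_upwards [nhdsWithin_le_nhds hFa, self_mem_nhdsWithin] with q hq1 hq2
    exact lt_of_le_of_lt (hfleF q hq2) hq1

end AuxSup

section AuxLip
variable {S : Type*} [Fintype S]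

theorem supLinear_lipschitz (K : Set (S → ℝ)) (hK : K.Nonempty) (L U : ℝ)
    (hLU : ∀ v ∈ K, ∀ s, L ≤ v s ∧ v s ≤ U) (f : (S → ℝ) → ℝ)
    (hf : ∀ b ∈ stdSimplex ℝ S, f b = sSup ((fun v => lineval v b) '' K)) :
    LipOnSimplex ((U - L) / 2) f := by
  have hBdd : ∀ b ∈ stdSimplex ℝ S, BddAbove ((fun v => lineval v b) '' K) := by
    intro b hb
    refine ⟨U * ∑ s, b s, ?_⟩
    rintro _ ⟨v, hv, rfl⟩
    show lineval v b ≤ _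
    rw [lineval, Finset.mul_sum]
    refine Finset.sum_le_sum fun s _ => ?_
    rw [mul_comm U (b s)]
    exact mul_le_mul_of_nonneg_left (hLU v hv s).2 (hb.1 s)
  have oneside : ∀ p ∈ stdSimplex ℝ S, ∀ q ∈ stdSimplex ℝ S,
      f p - f q ≤ (U - L) / 2 * l1dist p q := by
    intro p hp q hq
    rw [sub_le_iff_le_add, hf p hp]
    refine csSup_le (hK.image _) ?_
    rintro _ ⟨v, hv, rfl⟩
    show lineval v p ≤ _
    have h3 : lineval v q ≤ f q := by
      rw [hf q hq]
      exact le_csSup (hBdd q hq) ⟨v, hv, rfl⟩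
    have hsum : ∑ s, (p s - q s) = 0 := by
      rw [Finset.sum_sub_distrib, hp.2, hq.2]; ring
    have hm : lineval v p - lineval v q = ∑ s, (p s - q s) * (v s - (L + U) / 2) := by
      simp only [lineval]
      rw [← Finset.sum_sub_distrib]
      have h : ∑ s, (p s * v s - q s * v s) =
          (∑ s, (p s - q s) * (v s - (L + U) / 2)) + (L + U) / 2 * ∑ s, (p s - q s) := by
        rw [Finset.mul_sum, ← Finset.sum_add_distrib]
        exact Finset.sum_congr rfl fun s _ => by ring
      rw [h, hsum]; ring
    have key : lineval v p - lineval v q ≤ (U - L) / 2 * l1dist p q := by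
      rw [hm, l1dist, Finset.mul_sum]
      refine Finset.sum_le_sum fun s _ => ?_
      have hb := hLU v hv s
      calc (p s - q s) * (v s - (L + U) / 2)
          ≤ |(p s - q s) * (v s - (L + U) / 2)| := le_abs_self _
        _ = |p s - q s| * |v s - (L + U) / 2| := abs_mul _ _
        _ ≤ |p s - q s| * ((U - L) / 2) := by
            refine mul_le_mul_of_nonneg_left (abs_le.2 ⟨by linarith [hb.1, hb.2], by linarith [hb.1, hb.2]⟩) (abs_nonneg _)
        _ = (U - L) / 2 * |p s - q s| := mul_comm _ _
    linarith
  intro p hp q hq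
  have h1 := oneside p hp q hq
  have h2 := oneside q hq p hp
  have hsymm : l1dist q p = l1dist p q := by
    simp [l1dist, abs_sub_comm]
  rw [abs_sub_le_iff]
  exact ⟨h1, by rwa [hsymm] at h2⟩

end AuxLip

namespace OSPOSG

variable {S A1 A2 O : Type*} [Fintype S] [Fintype A1] [Fintype A2] [Fintype O]
  [Nonempty S] [Nonempty A1] [Nonempty A2] [Nonempty O]

/-- If `V` is represented as the (finite) pointwise supremum of a nonempty convex set `Γ` of
linear functions, then the max-composition `HV` is convex and continuous; if moreover every
`α ∈ Γ` takes values in `[L, U]`, then `HV` is `δ`-Lipschitz w.r.t. the ℓ1 metric. -/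
theorem maxComposition_convex_continuous (G : OSPOSG S A1 A2 O)
    (Γ : Set (S → ℝ)) (hne : Γ.Nonempty) (hΓconv : Convex ℝ Γ)
    (hbdd : ∀ b ∈ stdSimplex ℝ S, BddAbove ((fun α => lineval α b) '' Γ))
    (V : (S → ℝ) → ℝ)
    (hV : ∀ b ∈ stdSimplex ℝ S, V b = sSup ((fun α => lineval α b) '' Γ))
    (HV : (S → ℝ) → ℝ)
    (hHV : ∀ b ∈ stdSimplex ℝ S, HV b =
      sSup {y : ℝ | ∃ π1 ∈ stdSimplex ℝ A1, ∃ αb : A1 → O → S → ℝ,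
        (∀ a1 o, αb a1 o ∈ Γ) ∧ y = G.valcomp π1 αb b}) :
    ConvexOn ℝ (stdSimplex ℝ S) HV ∧ ContinuousOn HV (stdSimplex ℝ S) ∧
      ((∀ α ∈ Γ, ∀ b ∈ stdSimplex ℝ S, G.Lval ≤ lineval α b ∧ lineval α b ≤ G.Uval) →
        LipOnSimplex G.δval HV) := by
  classical
  set K : Set (S → ℝ) := {v | ∃ π1 ∈ stdSimplex ℝ A1, ∃ αb : A1 → O → S → ℝ,
    (∀ a1 o, αb a1 o ∈ Γ) ∧ v = G.valcompVert π1 αb} with hKdef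
  have hset : ∀ b : S → ℝ,
      {y : ℝ | ∃ π1 ∈ stdSimplex ℝ A1, ∃ αb : A1 → O → S → ℝ,
        (∀ a1 o, αb a1 o ∈ Γ) ∧ y = G.valcomp π1 αb b} = (fun v => lineval v b) '' K := by
    intro b
    ext y
    constructor
    · rintro ⟨π1, h1, αb, h2, rfl⟩
      exact ⟨G.valcompVert π1 αb, ⟨π1, h1, αb, h2, rfl⟩, rfl⟩
    · rintro ⟨v, ⟨π1, h1, αb, h2, rfl⟩, rfl⟩
      exact ⟨π1, h1, αb, h2, rfl⟩
  -- nonemptiness of K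
  have hcard : (0:ℝ) < (Fintype.card A1 : ℝ) := by
    exact_mod_cast Fintype.card_pos
  have hunif : (fun _ : A1 => (Fintype.card A1 : ℝ)⁻¹) ∈ stdSimplex ℝ A1 := by
    constructor
    · intro a; positivity
    · rw [Finset.sum_const, Finset.card_univ, nsmul_eq_mul, mul_inv_cancel₀ hcard.ne']
  have hKne : K.Nonempty :=
    ⟨G.valcompVert (fun _ : A1 => (Fintype.card A1 : ℝ)⁻¹) (fun _ _ => hne.choose),
      ⟨_, hunif, _, fun _ _ => hne.choose_spec, rfl⟩⟩
  -- vertices of the simplex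
  have hvert : ∀ s : S, (fun t => if t = s then (1:ℝ) else 0) ∈ stdSimplex ℝ S := by
    intro s
    constructor
    · intro t; by_cases h : t = s <;> simp [h]
    · simp
  have heval : ∀ (α : S → ℝ) (s : S),
      lineval α (fun t => if t = s then (1:ℝ) else 0) = α s := by
    intro α s
    simp [lineval, ite_mul]
  -- a uniform upper bound on vertex values of elements of Γ
  have hMs : ∀ s : S, ∃ M : ℝ, ∀ α ∈ Γ, α s ≤ M := by
    intro s
    obtain ⟨M, hM⟩ := hbdd _ (hvert s)
    refine ⟨M, fun α hα => ?_⟩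
    have := hM ⟨α, hα, rfl⟩
    rw [← heval α s]
    exact this
  choose Ms hMs' using hMs
  set M0 : ℝ := Finset.univ.sup' Finset.univ_nonempty Ms with hM0def
  have hM0 : ∀ α ∈ Γ, ∀ s, α s ≤ M0 := fun α hα s =>
    (hMs' s α hα).trans (Finset.le_sup' Ms (Finset.mem_univ s))
  have hγ0 : (0:ℝ) ≤ G.γ := G.γ_pos.le
  -- upper bound on vertex values of elements of K
  have hKbound : ∀ v ∈ K, ∀ s, v s ≤ G.rmax + G.γ * M0 := by
    rintro v ⟨π1, h1, αb, h2, rfl⟩ s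
    have a2 : A2 := Classical.arbitrary A2
    refine le_trans (Finset.inf'_le _ (Finset.mem_univ a2)) ?_
    have hterm : ∀ a1 : A1,
        π1 a1 * (G.R s a1 a2 + G.γ * ∑ o, ∑ s', G.T s a1 a2 o s' * αb a1 o s') ≤
          π1 a1 * (G.rmax + G.γ * M0) := by
      intro a1
      refine mul_le_mul_of_nonneg_left ?_ (h1.1 a1)
      have hR : G.R s a1 a2 ≤ G.rmax :=
        Finset.le_sup' (fun x : S × A1 × A2 => G.R x.1 x.2.1 x.2.2) (Finset.mem_univ (s, a1, a2))
      have hinner : ∑ o, ∑ s', G.T s a1 a2 o s' * αb a1 o s' ≤ M0 := by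
        calc ∑ o, ∑ s', G.T s a1 a2 o s' * αb a1 o s'
            ≤ ∑ o, ∑ s', G.T s a1 a2 o s' * M0 :=
              Finset.sum_le_sum fun o _ => Finset.sum_le_sum fun s' _ =>
                mul_le_mul_of_nonneg_left (hM0 _ (h2 a1 o) s') (G.T_nonneg s a1 a2 o s')
          _ = M0 := by
              simp only [← Finset.sum_mul]
              rw [G.T_sum s a1 a2, one_mul]
      have := mul_le_mul_of_nonneg_left hinner hγ0
      linarith
    refine le_trans (Finset.sum_le_sum fun a1 _ => hterm a1) ?_
    rw [← Finset.sum_mul, h1.2, one_mul]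
  have hHV' : ∀ b ∈ stdSimplex ℝ S, HV b = sSup ((fun v => lineval v b) '' K) := by
    intro b hb
    rw [hHV b hb, hset b]
  have hmain := supLinear_convex_continuous K hKne (G.rmax + G.γ * M0) hKbound HV hHV'
  refine ⟨hmain.1, hmain.2, ?_⟩
  -- Lipschitz part
  intro hLUΓ
  have h1γ : (0:ℝ) < 1 - G.γ := by linarith [G.γ_lt_one]
  have hvertLU : ∀ α ∈ Γ, ∀ s, G.Lval ≤ α s ∧ α s ≤ G.Uval := by
    intro α hα s
    have := hLUΓ α hα _ (hvert s)
    rwa [heval] at this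
  have hLfix : G.rmin + G.γ * G.Lval = G.Lval := by
    rw [Lval]
    field_simp
    ring
  have hUfix : G.rmax + G.γ * G.Uval = G.Uval := by
    rw [Uval]
    field_simp
    ring
  have hKLU : ∀ v ∈ K, ∀ s, G.Lval ≤ v s ∧ v s ≤ G.Uval := by
    rintro v ⟨π1, h1, αb, h2, rfl⟩ s
    constructor
    · refine Finset.le_inf' _ _ fun a2 _ => ?_
      have hterm : ∀ a1 : A1,
          π1 a1 * G.Lval ≤
            π1 a1 * (G.R s a1 a2 + G.γ * ∑ o, ∑ s', G.T s a1 a2 o s' * αb a1 o s') := by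
        intro a1
        refine mul_le_mul_of_nonneg_left ?_ (h1.1 a1)
        have hR : G.rmin ≤ G.R s a1 a2 :=
          Finset.inf'_le (fun x : S × A1 × A2 => G.R x.1 x.2.1 x.2.2) (Finset.mem_univ (s, a1, a2))
        have hinner : G.Lval ≤ ∑ o, ∑ s', G.T s a1 a2 o s' * αb a1 o s' := by
          calc G.Lval = (∑ o, ∑ s', G.T s a1 a2 o s') * G.Lval := by
                rw [G.T_sum s a1 a2, one_mul]
            _ = ∑ o, ∑ s', G.T s a1 a2 o s' * G.Lval := by
                simp only [← Finset.sum_mul]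
            _ ≤ ∑ o, ∑ s', G.T s a1 a2 o s' * αb a1 o s' :=
                Finset.sum_le_sum fun o _ => Finset.sum_le_sum fun s' _ =>
                  mul_le_mul_of_nonneg_left (hvertLU _ (h2 a1 o) s').1 (G.T_nonneg s a1 a2 o s')
        have := mul_le_mul_of_nonneg_left hinner hγ0
        linarith
      calc G.Lval = ∑ a1, π1 a1 * G.Lval := by rw [← Finset.sum_mul, h1.2, one_mul]
        _ ≤ _ := Finset.sum_le_sum fun a1 _ => hterm a1
    · have a2 : A2 := Classical.arbitrary A2
      refine le_trans (Finset.inf'_le _ (Finset.mem_univ a2)) ?_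
      have hterm : ∀ a1 : A1,
          π1 a1 * (G.R s a1 a2 + G.γ * ∑ o, ∑ s', G.T s a1 a2 o s' * αb a1 o s') ≤
            π1 a1 * G.Uval := by
        intro a1
        refine mul_le_mul_of_nonneg_left ?_ (h1.1 a1)
        have hR : G.R s a1 a2 ≤ G.rmax :=
          Finset.le_sup' (fun x : S × A1 × A2 => G.R x.1 x.2.1 x.2.2) (Finset.mem_univ (s, a1, a2))
        have hinner : ∑ o, ∑ s', G.T s a1 a2 o s' * αb a1 o s' ≤ G.Uval := by
          calc ∑ o, ∑ s', G.T s a1 a2 o s' * αb a1 o s'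
              ≤ ∑ o, ∑ s', G.T s a1 a2 o s' * G.Uval :=
                Finset.sum_le_sum fun o _ => Finset.sum_le_sum fun s' _ =>
                  mul_le_mul_of_nonneg_left (hvertLU _ (h2 a1 o) s').2 (G.T_nonneg s a1 a2 o s')
            _ = G.Uval := by
                simp only [← Finset.sum_mul]
                rw [G.T_sum s a1 a2, one_mul]
        have := mul_le_mul_of_nonneg_left hinner hγ0
        linarith
      refine le_trans (Finset.sum_le_sum fun a1 _ => hterm a1) ?_
      rw [← Finset.sum_mul, h1.2, one_mul]
  have hlip := supLinear_lipschitz K hKne G.Lval G.Uval hKLU HV hHV'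
  simpa [OSPOSG.δval] using hlip


end OSPOSG
end
end

section
/- Let G be a one-sided POSG, Γ a nonempty convex set of linear functions on Δ(S) such that V(b) = sup_{α ∈ Γ} α(b) is finite for every b ∈ Δ(S), and b ∈ Δ(S). Then sup_{π1 ∈ Π1} inf_{π2 ∈ Π2} u^{V,b}(π1, π2) = inf_{π2 ∈ Π2} sup_{π1 ∈ Π1} u^{V,b}(π1, π2); moreover the outer supremum in the first expression and the outer infimum in the second expression are attained. -/
open scoped BigOperators

noncomputable section

/-!
The payoff is linear in player 1's strategy, `u(π1, π2) = ∑ a1, π1 a1 * g a1 π2`, so by Sion's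
minimax theorem it suffices that each `g a1` be convex and lower semicontinuous on the compact
convex set `Π2`; a saddle point then gives the equality with both optima attained. In `g a1` the
continuation term of an observation `o` is `P(o) * V(τ_o)`, the perspective of `V` at the
unnormalized updated belief `w_o`. As `V` is a supremum of the linear functions in `Γ`, this is
the support function `⨆ α ∈ Γ, α(w_o)`, which is convex and lower semicontinuous, while `w_o`
depends linearly on `π2`.
-/

open Set

section ConvexSemicontinuous

variable {𝕜 α β E ι : Type*}

theorem convexOn_sum [Semiring 𝕜] [PartialOrder 𝕜] [AddCommMonoid E] [SMul 𝕜 E]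
    [AddCommMonoid β] [PartialOrder β] [IsOrderedAddMonoid β] [Module 𝕜 β] {s : Set E}
    (hs : Convex 𝕜 s) {t : Finset ι} {f : ι → E → β} (hf : ∀ i ∈ t, ConvexOn 𝕜 s (f i)) :
    ConvexOn 𝕜 s fun x => ∑ i ∈ t, f i x := by
  classical
  induction t using Finset.induction_on with
  | empty => simpa using convexOn_const 0 hs
  | insert i t hi ih =>
    simp only [Finset.sum_insert hi]
    exact (hf i (t.mem_insert_self i)).add (ih fun j hj => hf j (Finset.mem_insert_of_mem hj))

theorem LowerSemicontinuousOn.const_mul [TopologicalSpace α] {s : Set α} {f : α → ℝ}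
    (hf : LowerSemicontinuousOn f s) {c : ℝ} (hc : 0 ≤ c) :
    LowerSemicontinuousOn (fun x => c * f x) s :=
  (continuous_const_mul c).comp_lowerSemicontinuousOn hf (monotone_mul_left_of_nonneg hc)

theorem LowerSemicontinuousOn.congr [TopologicalSpace α] [Preorder β] {s : Set α} {f g : α → β}
    (hf : LowerSemicontinuousOn f s) (hfg : EqOn f g s) : LowerSemicontinuousOn g s := fun x hx =>
  LowerSemicontinuousWithinAt.congr_of_eventuallyEq (hf x hx) hx hfg.eventuallyEq_nhdsWithin

end ConvexSemicontinuous

namespace IsSaddlePointOn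

variable {E F : Type*} {X : Set E} {Y : Set F} {f : E → F → ℝ} {a : E} {b : F}

theorem ciInf_eq (h : IsSaddlePointOn X Y f a b) (ha : a ∈ X) (hb : b ∈ Y) :
    ⨅ x : X, f x b = f a b :=
  le_antisymm (ciInf_le ⟨f a b, forall_mem_range.2 fun x : X => h x x.2 b hb⟩ ⟨a, ha⟩)
    (have : Nonempty X := ⟨⟨a, ha⟩⟩; le_ciInf fun x => h x x.2 b hb)

theorem ciSup_eq (h : IsSaddlePointOn X Y f a b) (ha : a ∈ X) (hb : b ∈ Y) :
    ⨆ y : Y, f a y = f a b :=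
  le_antisymm (have : Nonempty Y := ⟨⟨b, hb⟩⟩; ciSup_le fun y => h a ha y y.2)
    (le_ciSup ⟨f a b, forall_mem_range.2 fun y : Y => h a ha y y.2⟩ ⟨b, hb⟩)

theorem ciSup_ciInf_eq (h : IsSaddlePointOn X Y f a b) (ha : a ∈ X) (hb : b ∈ Y)
    (hlo : ∀ y : Y, BddBelow (range fun x : X => f x y)) :
    ⨆ y : Y, ⨅ x : X, f x y = f a b := by
  have : Nonempty Y := ⟨⟨b, hb⟩⟩
  have hle : ∀ y : Y, ⨅ x : X, f x y ≤ f a b := fun y =>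
    (ciInf_le (hlo y) ⟨a, ha⟩).trans (h a ha y y.2)
  refine le_antisymm (ciSup_le hle) ?_
  rw [← h.ciInf_eq ha hb]
  exact le_ciSup ⟨f a b, forall_mem_range.2 hle⟩ ⟨b, hb⟩

theorem ciInf_ciSup_eq (h : IsSaddlePointOn X Y f a b) (ha : a ∈ X) (hb : b ∈ Y)
    (hhi : ∀ x : X, BddAbove (range fun y : Y => f x y)) :
    ⨅ x : X, ⨆ y : Y, f x y = f a b := by
  have : Nonempty X := ⟨⟨a, ha⟩⟩
  have hge : ∀ x : X, f a b ≤ ⨆ y : Y, f x y := fun x =>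
    (h x x.2 b hb).trans (le_ciSup (hhi x) ⟨b, hb⟩)
  refine le_antisymm ?_ (le_ciInf hge)
  rw [← h.ciSup_eq ha hb]
  exact ciInf_le ⟨f a b, forall_mem_range.2 hge⟩ ⟨a, ha⟩

theorem minimax_attained (h : IsSaddlePointOn X Y f a b) (ha : a ∈ X) (hb : b ∈ Y)
    (hlo : ∀ y : Y, BddBelow (range fun x : X => f x y))
    (hhi : ∀ x : X, BddAbove (range fun y : Y => f x y)) :
    ((⨆ y : Y, ⨅ x : X, f x y) = ⨅ x : X, ⨆ y : Y, f x y) ∧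
    (∃ y₀ : Y, ⨅ x : X, f x y₀ = ⨆ y : Y, ⨅ x : X, f x y) ∧
    (∃ x₀ : X, ⨆ y : Y, f x₀ y = ⨅ x : X, ⨆ y : Y, f x y) := by
  rw [h.ciSup_ciInf_eq ha hb hlo, h.ciInf_ciSup_eq ha hb hhi]
  exact ⟨rfl, ⟨⟨b, hb⟩, h.ciInf_eq ha hb⟩, ⟨⟨a, ha⟩, h.ciSup_eq ha hb⟩⟩

end IsSaddlePointOn

section FiniteMinimax

variable {ι E : Type*} [Fintype ι] [Nonempty ι] [TopologicalSpace E] [AddCommGroup E]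
  [Module ℝ E] [IsTopologicalAddGroup E] [ContinuousSMul ℝ E] {K : Set E} {g : ι → E → ℝ}

theorem minimax_sum_mul (hK : IsCompact K) (hKconv : Convex ℝ K) (hKne : K.Nonempty)
    (hconv : ∀ i, ConvexOn ℝ K (g i)) (hlsc : ∀ i, LowerSemicontinuousOn (g i) K) :
    ((⨆ p : stdSimplex ℝ ι, ⨅ y : K, ∑ i, p.1 i * g i y) =
      ⨅ y : K, ⨆ p : stdSimplex ℝ ι, ∑ i, p.1 i * g i y) ∧
    (∃ p₀ : stdSimplex ℝ ι, ⨅ y : K, ∑ i, p₀.1 i * g i y =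
      ⨆ p : stdSimplex ℝ ι, ⨅ y : K, ∑ i, p.1 i * g i y) ∧
    (∃ y₀ : K, ⨆ p : stdSimplex ℝ ι, ∑ i, p.1 i * g i y₀ =
      ⨅ y : K, ⨆ p : stdSimplex ℝ ι, ∑ i, p.1 i * g i y) := by
  classical
  have hlsc' : ∀ p ∈ stdSimplex ℝ ι, LowerSemicontinuousOn (fun y => ∑ i, p i * g i y) K :=
    fun p hp => lowerSemicontinuousOn_sum fun i _ => (hlsc i).const_mul (hp.1 i)
  have hconv' : ∀ p ∈ stdSimplex ℝ ι, ConvexOn ℝ K (fun y => ∑ i, p i * g i y) :=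
    fun p hp => convexOn_sum hKconv fun i _ => (hconv i).smul (hp.1 i)
  obtain ⟨y₀, hy₀, p₀, hp₀, hsaddle⟩ := Sion.exists_isSaddlePointOn hKne hKconv hK hlsc'
    (fun p hp => (hconv' p hp).quasiconvexOn) (convex_stdSimplex ℝ ι)
    ⟨_, single_mem_stdSimplex ℝ (Classical.arbitrary ι)⟩ (isCompact_stdSimplex ℝ ι)
    (fun y _ => (by fun_prop : Continuous fun p : ι → ℝ => ∑ i, p i * g i y)
      |>.upperSemicontinuous.upperSemicontinuousOn _)
    (fun y _ => ((Fintype.linearCombination ℝ fun i => g i y).concaveOn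
      (convex_stdSimplex ℝ ι)).quasiconcaveOn)
  refine hsaddle.minimax_attained hy₀ hp₀ (fun p => ?_) (fun y => ?_)
  · simpa only [image_eq_range] using (hlsc' p.1 p.2).bddBelow_of_isCompact hK
  · simpa only [image_eq_range] using (isCompact_stdSimplex ℝ ι).bddAbove_image
      (f := fun p : ι → ℝ => ∑ i, p i * g i y) (by fun_prop)

end FiniteMinimax

section SupportFun

variable {S : Type*} [Fintype S] {Γ : Set (S → ℝ)}

def supportFun (Γ : Set (S → ℝ)) (x : S → ℝ) : ℝ := ⨆ α : Γ, lineval α x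

theorem lineval_single [DecidableEq S] (α : S → ℝ) (s : S) : lineval α (Pi.single s 1) = α s := by
  simp [lineval, Pi.single_apply]

theorem lineval_add (α x y : S → ℝ) : lineval α (x + y) = lineval α x + lineval α y := by
  simp only [lineval, Pi.add_apply, add_mul, Finset.sum_add_distrib]

theorem lineval_smul (α x : S → ℝ) (t : ℝ) : lineval α (t • x) = t * lineval α x := by
  simp only [lineval, Pi.smul_apply, smul_eq_mul, Finset.mul_sum, mul_assoc]

theorem continuous_lineval (α : S → ℝ) : Continuous (lineval α) := by
  unfold lineval
  fun_prop

theorem bddAbove_range_lineval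
    (hbdd : ∀ b ∈ stdSimplex ℝ S, BddAbove ((fun α => lineval α b) '' Γ))
    {x : S → ℝ} (hx : 0 ≤ x) : BddAbove (range fun α : Γ => lineval α x) := by
  classical
  have hvert : ∀ s, ∃ M, ∀ α ∈ Γ, α s ≤ M := fun s => by
    obtain ⟨M, hM⟩ := hbdd _ (single_mem_stdSimplex ℝ s)
    exact ⟨M, fun α hα => lineval_single α s ▸ hM ⟨α, hα, rfl⟩⟩
  choose M hM using hvert
  exact ⟨∑ s, x s * M s, forall_mem_range.2 fun α => Finset.sum_le_sum fun s _ =>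
    mul_le_mul_of_nonneg_left (hM s α α.2) (hx s)⟩

theorem convexOn_supportFun (hne : Γ.Nonempty)
    (hbdd : ∀ b ∈ stdSimplex ℝ S, BddAbove ((fun α => lineval α b) '' Γ)) :
    ConvexOn ℝ (Ici 0) (supportFun Γ) := by
  have := hne.to_subtype
  refine ⟨convex_Ici 0, fun x hx y hy a b ha hb _ => ciSup_le fun α => ?_⟩
  rw [lineval_add, lineval_smul, lineval_smul, smul_eq_mul, smul_eq_mul]
  gcongr
  · exact le_ciSup (bddAbove_range_lineval hbdd hx) α
  · exact le_ciSup (bddAbove_range_lineval hbdd hy) α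

theorem lowerSemicontinuousOn_supportFun
    (hbdd : ∀ b ∈ stdSimplex ℝ S, BddAbove ((fun α => lineval α b) '' Γ)) :
    LowerSemicontinuousOn (supportFun Γ) (Ici 0) :=
  lowerSemicontinuousOn_ciSup (fun _ hx => bddAbove_range_lineval hbdd hx) fun α =>
    (continuous_lineval α.1).lowerSemicontinuous.lowerSemicontinuousOn _

theorem supportFun_smul {t : ℝ} (ht : 0 ≤ t) (x : S → ℝ) :
    supportFun Γ (t • x) = t * supportFun Γ x := by
  simp only [supportFun, lineval_smul]
  exact (Real.mul_iSup_of_nonneg ht _).symm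

theorem sum_smul_div_sum {w : S → ℝ} (hw : 0 ≤ w) :
    (∑ s, w s) • (fun s => w s / ∑ s', w s') = w := by
  rcases (Fintype.sum_nonneg hw).eq_or_lt with h | h
  · obtain rfl := (Fintype.sum_eq_zero_iff_of_nonneg hw).1 h.symm
    simp
  · ext s
    simp [mul_div_cancel₀ _ h.ne']

theorem div_sum_mem_stdSimplex {w : S → ℝ} (hw : 0 ≤ w) (h : 0 < ∑ s, w s) :
    (fun s => w s / ∑ s', w s') ∈ stdSimplex ℝ S :=
  ⟨fun s => div_nonneg (hw s) h.le, by rw [← Finset.sum_div, div_self h.ne']⟩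

theorem sum_mul_div_sum_eq_supportFun {V : (S → ℝ) → ℝ}
    (hV : ∀ b ∈ stdSimplex ℝ S, V b = sSup ((fun α => lineval α b) '' Γ))
    {w : S → ℝ} (hw : 0 ≤ w) :
    (∑ s, w s) * V (fun s => w s / ∑ s', w s') = supportFun Γ w := by
  conv_rhs => rw [← sum_smul_div_sum hw, supportFun_smul (Fintype.sum_nonneg hw)]
  rcases (Fintype.sum_nonneg hw).eq_or_lt with h | h
  · rw [← h, zero_mul, zero_mul]
  · rw [hV _ (div_sum_mem_stdSimplex hw h), sSup_image']
    rfl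

end SupportFun

namespace OSPOSG

section StageStrategies

variable {S A2 : Type*} [Fintype A2]

theorem Pi2_eq_pi : Pi2 S A2 = univ.pi fun _ => stdSimplex ℝ A2 := by
  ext
  simp [Pi2]

theorem isCompact_Pi2 : IsCompact (Pi2 S A2) := by
  rw [Pi2_eq_pi]
  exact isCompact_univ_pi fun _ => isCompact_stdSimplex ℝ A2

theorem convex_Pi2 : Convex ℝ (Pi2 S A2) := by
  rw [Pi2_eq_pi]
  exact convex_pi fun _ _ => convex_stdSimplex ℝ A2

theorem nonempty_Pi2 [Nonempty A2] : (Pi2 S A2).Nonempty := by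
  classical
  exact ⟨fun _ => Pi.single (Classical.arbitrary A2) 1, fun _ => single_mem_stdSimplex ℝ _⟩

end StageStrategies

section ActionValue

variable {S A1 A2 O : Type*} [Fintype S] [Fintype A1] [Fintype A2] [Fintype O]
  (G : OSPOSG S A1 A2 O) (b : S → ℝ)

/-- The unnormalized updated belief `τ(b, a1, π2, o)`. -/
def obsWeight (a1 : A1) (o : O) : (S → A2 → ℝ) →ₗ[ℝ] S → ℝ where
  toFun π2 s' := ∑ s, ∑ a2, b s * π2 s a2 * G.T s a1 a2 o s'
  map_add' _ _ := by
    ext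
    simp only [Pi.add_apply, mul_add, add_mul, Finset.sum_add_distrib]
  map_smul' _ _ := by
    ext
    simp [Finset.mul_sum, mul_assoc, mul_left_comm]

def stageReward (a1 : A1) : (S → A2 → ℝ) →ₗ[ℝ] ℝ where
  toFun π2 := ∑ s, ∑ a2, b s * π2 s a2 * G.R s a1 a2
  map_add' _ _ := by
    simp only [Pi.add_apply, mul_add, add_mul, Finset.sum_add_distrib]
  map_smul' _ _ := by
    simp [Finset.mul_sum, mul_assoc, mul_left_comm]

def actionValue (V : (S → ℝ) → ℝ) (a1 : A1) (π2 : S → A2 → ℝ) : ℝ :=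
  G.stageReward b a1 π2 +
    G.γ * ∑ o, (∑ s', G.obsWeight b a1 o π2 s') * V (G.beliefUpd b a1 π2 o)

theorem Pr_eq_mul_sum_obsWeight (π1 : A1 → ℝ) (π2 : S → A2 → ℝ) (a1 : A1) (o : O) :
    G.Pr b π1 π2 a1 o = π1 a1 * ∑ s', G.obsWeight b a1 o π2 s' := by
  simp only [Pr, obsWeight, LinearMap.coe_mk, AddHom.coe_mk, Finset.mul_sum]
  conv_rhs => rw [Finset.sum_comm]; enter [2, s]; rw [Finset.sum_comm]
  simp only [mul_assoc, mul_left_comm]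

theorem stageU_eq_sum_mul_actionValue (V : (S → ℝ) → ℝ) (π1 : A1 → ℝ) (π2 : S → A2 → ℝ) :
    G.stageU V b π1 π2 = ∑ a1, π1 a1 * G.actionValue b V a1 π2 := by
  simp only [stageU, actionValue, mul_add, Finset.sum_add_distrib]
  congr 1
  · rw [Finset.sum_comm]
    simp [stageReward, Finset.mul_sum, mul_assoc, mul_left_comm]
  · simp only [Pr_eq_mul_sum_obsWeight, Finset.mul_sum (Finset.univ : Finset A1),
      Finset.mul_sum (Finset.univ : Finset O)]
    exact Finset.sum_congr rfl fun _ _ => Finset.sum_congr rfl fun _ _ => by ring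

theorem obsWeight_nonneg (hb : b ∈ stdSimplex ℝ S) {π2 : S → A2 → ℝ} (hπ2 : π2 ∈ Pi2 S A2)
    (a1 : A1) (o : O) : 0 ≤ G.obsWeight b a1 o π2 := fun s' =>
  Finset.sum_nonneg fun s _ => Finset.sum_nonneg fun a2 _ =>
    mul_nonneg (mul_nonneg (hb.1 s) ((hπ2 s).1 a2)) (G.T_nonneg s a1 a2 o s')

variable {Γ : Set (S → ℝ)} {V : (S → ℝ) → ℝ}

theorem actionValue_eqOn (hV : ∀ b ∈ stdSimplex ℝ S, V b = sSup ((fun α => lineval α b) '' Γ))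
    (hb : b ∈ stdSimplex ℝ S) (a1 : A1) :
    EqOn (G.actionValue b V a1)
      (fun π2 => G.stageReward b a1 π2 + G.γ * ∑ o, supportFun Γ (G.obsWeight b a1 o π2))
      (Pi2 S A2) := fun π2 hπ2 =>
  congrArg (G.stageReward b a1 π2 + G.γ * ·) <| Finset.sum_congr rfl fun o _ =>
    sum_mul_div_sum_eq_supportFun hV (G.obsWeight_nonneg b hb hπ2 a1 o)

theorem convexOn_actionValue (hne : Γ.Nonempty)
    (hbdd : ∀ b ∈ stdSimplex ℝ S, BddAbove ((fun α => lineval α b) '' Γ))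
    (hV : ∀ b ∈ stdSimplex ℝ S, V b = sSup ((fun α => lineval α b) '' Γ))
    (hb : b ∈ stdSimplex ℝ S) (a1 : A1) :
    ConvexOn ℝ (Pi2 S A2) (G.actionValue b V a1) :=
  ConvexOn.congr (((G.stageReward b a1).convexOn convex_Pi2).add
    ((convexOn_sum convex_Pi2 fun o _ =>
      ((convexOn_supportFun hne hbdd).comp_linearMap (G.obsWeight b a1 o)).subset
        (fun _ hπ2 => G.obsWeight_nonneg b hb hπ2 a1 o) convex_Pi2).smul G.γ_pos.le))
    (G.actionValue_eqOn b hV hb a1).symm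

theorem lowerSemicontinuousOn_actionValue
    (hbdd : ∀ b ∈ stdSimplex ℝ S, BddAbove ((fun α => lineval α b) '' Γ))
    (hV : ∀ b ∈ stdSimplex ℝ S, V b = sSup ((fun α => lineval α b) '' Γ))
    (hb : b ∈ stdSimplex ℝ S) (a1 : A1) :
    LowerSemicontinuousOn (G.actionValue b V a1) (Pi2 S A2) :=
  LowerSemicontinuousOn.congr
    ((G.stageReward b a1).continuous_of_finiteDimensional.lowerSemicontinuous
      |>.lowerSemicontinuousOn _ |>.add <|
      (lowerSemicontinuousOn_sum fun o _ =>
        (lowerSemicontinuousOn_supportFun hbdd).comp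
          (G.obsWeight b a1 o).continuous_of_finiteDimensional.continuousOn
          (fun _ hπ2 => G.obsWeight_nonneg b hb hπ2 a1 o)).const_mul G.γ_pos.le)
    (G.actionValue_eqOn b hV hb a1).symm

end ActionValue

variable {S A1 A2 O : Type*} [Fintype S] [Fintype A1] [Fintype A2] [Fintype O]
  [Nonempty S] [Nonempty A1] [Nonempty A2] [Nonempty O]

theorem stage_game_minimax_general (G : OSPOSG S A1 A2 O)
    (Γ : Set (S → ℝ)) (hne : Γ.Nonempty)
    (hbdd : ∀ b ∈ stdSimplex ℝ S, BddAbove ((fun α => lineval α b) '' Γ))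
    (V : (S → ℝ) → ℝ)
    (hV : ∀ b ∈ stdSimplex ℝ S, V b = sSup ((fun α => lineval α b) '' Γ))
    (b : S → ℝ) (hb : b ∈ stdSimplex ℝ S) :
    ((⨆ π1 : stdSimplex ℝ A1, ⨅ π2 : Pi2 S A2, G.stageU V b π1.1 π2.1) =
      ⨅ π2 : Pi2 S A2, ⨆ π1 : stdSimplex ℝ A1, G.stageU V b π1.1 π2.1) ∧
    (∃ π1s : stdSimplex ℝ A1,
      (⨅ π2 : Pi2 S A2, G.stageU V b π1s.1 π2.1) =
        ⨆ π1 : stdSimplex ℝ A1, ⨅ π2 : Pi2 S A2, G.stageU V b π1.1 π2.1) ∧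
    (∃ π2s : Pi2 S A2,
      (⨆ π1 : stdSimplex ℝ A1, G.stageU V b π1.1 π2s.1) =
        ⨅ π2 : Pi2 S A2, ⨆ π1 : stdSimplex ℝ A1, G.stageU V b π1.1 π2.1) := by
  simp only [stageU_eq_sum_mul_actionValue]
  exact minimax_sum_mul isCompact_Pi2 convex_Pi2 nonempty_Pi2
    (G.convexOn_actionValue b hne hbdd hV hb) (G.lowerSemicontinuousOn_actionValue b hbdd hV hb)

/-- The stage game has a value: `sup_{π1} inf_{π2} u^{V,b} = inf_{π2} sup_{π1} u^{V,b}`, and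
the outer supremum resp. infimum are attained. -/
theorem stage_game_minimax (G : OSPOSG S A1 A2 O)
    (Γ : Set (S → ℝ)) (hne : Γ.Nonempty) (hΓconv : Convex ℝ Γ)
    (hbdd : ∀ b ∈ stdSimplex ℝ S, BddAbove ((fun α => lineval α b) '' Γ))
    (V : (S → ℝ) → ℝ)
    (hV : ∀ b ∈ stdSimplex ℝ S, V b = sSup ((fun α => lineval α b) '' Γ))
    (b : S → ℝ) (hb : b ∈ stdSimplex ℝ S) :
    ((⨆ π1 : stdSimplex ℝ A1, ⨅ π2 : Pi2 S A2, G.stageU V b π1.1 π2.1) =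
      ⨅ π2 : Pi2 S A2, ⨆ π1 : stdSimplex ℝ A1, G.stageU V b π1.1 π2.1) ∧
    (∃ π1s : stdSimplex ℝ A1,
      (⨅ π2 : Pi2 S A2, G.stageU V b π1s.1 π2.1) =
        ⨆ π1 : stdSimplex ℝ A1, ⨅ π2 : Pi2 S A2, G.stageU V b π1.1 π2.1) ∧
    (∃ π2s : Pi2 S A2,
      (⨆ π1 : stdSimplex ℝ A1, G.stageU V b π1.1 π2s.1) =
        ⨅ π2 : Pi2 S A2, ⨆ π1 : stdSimplex ℝ A1, G.stageU V b π1.1 π2.1) :=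
  stage_game_minimax_general G Γ hne hbdd V hV b hb

end OSPOSG
end
end

section
/- Let G be a one-sided POSG and let Γ₁, Γ₂ be nonempty convex sets of linear functions on Δ(S) such that sup_{α ∈ Γ₁} α(b) = sup_{α ∈ Γ₂} α(b) is finite for every b ∈ Δ(S). Then for every b ∈ Δ(S), sup_{π1 ∈ Π1} sup_{ᾱ ∈ Γ₁^{A1×O}} valcomp(π1, ᾱ)(b) = sup_{π1 ∈ Π1} sup_{ᾱ ∈ Γ₂^{A1×O}} valcomp(π1, ᾱ)(b); that is, the operator H does not depend on the convex set of linear functions used to represent the value function. -/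
open scoped BigOperators

noncomputable section

/-!
Fix player 1's stage strategy `π1` and the belief `b`. Then `valcomp(π1, ᾱ)(b)` is the minimum,
over player 2's pure stage strategies `d : S → A2`, of functions of `ᾱ` that are affine with
nonnegative coefficients. On the convex box `Γ₂^{A1×O}` a separation argument (minimax for
finitely many concave functions) bounds this minimum by one fixed mixture of the `d`'s, at no
cost in the supremum. That mixture is again a sum of terms `lineval (ᾱ a1 o) w` with `w ≥ 0`,
and each such term has the same supremum over `Γ₁` as over `Γ₂` (normalize `w` to a belief);
replacing the coordinates of `ᾱ` one at a time, every upper bound of the values over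
`Γ₂^{A1×O}` bounds those over `Γ₁^{A1×O}`. By symmetry both sets of values have the same upper
bounds, hence the same supremum.
-/

section Convexity

theorem csSup_eq_csSup_of_upperBounds_eq {α : Type*} [ConditionallyCompleteLinearOrder α]
    {s t : Set α} (hs : s.Nonempty) (ht : t.Nonempty) (h : upperBounds s = upperBounds t) :
    sSup s = sSup t := by
  by_cases hb : BddAbove s
  · exact (((isLUB_congr h).1 (isLUB_csSup hs hb)).csSup_eq ht).symm
  · have hb' : ¬BddAbove t := fun ht' => hb (show (upperBounds s).Nonempty from h ▸ ht')
    rw [csSup_of_not_bddAbove hb, csSup_of_not_bddAbove hb']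

theorem map_single_nonpos_of_forall_pos_lt {D : Type*} [Fintype D] [DecidableEq D]
    {f : StrongDual ℝ (D → ℝ)} {u : ℝ}
    (hf : ∀ y ∈ Set.univ.pi fun _ : D => Set.Ioi 0, f y < u) (d : D) :
    f (Pi.single d 1) ≤ 0 := by
  by_contra! hc
  have h1 := hf 1 fun _ _ => Set.mem_Ioi.2 one_pos
  set r := (u - f 1) / f (Pi.single d 1)
  have hr : 0 ≤ r := div_nonneg (by linarith) hc.le
  have hray := hf (1 + r • Pi.single d 1) fun d' _ => by
    have : 0 ≤ (Pi.single d (1 : ℝ) : D → ℝ) d' := by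
      rw [Pi.single_apply]; split_ifs <;> norm_num
    simp only [Pi.add_apply, Pi.one_apply, Pi.smul_apply, smul_eq_mul, Set.mem_Ioi]
    positivity
  rw [map_add, map_smul, smul_eq_mul, div_mul_cancel₀ _ hc.ne'] at hray
  linarith

theorem nonneg_of_forall_pos_lt {D : Type*} [Fintype D] {f : StrongDual ℝ (D → ℝ)} {u : ℝ}
    (hf : ∀ y ∈ Set.univ.pi fun _ : D => Set.Ioi 0, f y < u) : 0 ≤ u := by
  have h0 : (0 : D → ℝ) ∈ closure (Set.univ.pi fun _ : D => Set.Ioi 0) := by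
    rw [closure_pi_set]
    exact fun d _ => by simp [closure_Ioi]
  simpa using closure_minimal (t := {y | f y ≤ u}) (fun y hy => (hf y hy).le)
    (isClosed_le f.continuous continuous_const) h0

theorem Convex.exists_mem_stdSimplex_sum_mul_nonpos {D : Type*} [Fintype D] [Nonempty D]
    {K : Set (D → ℝ)} (hK : Convex ℝ K) (hpos : ∀ y ∈ K, ∃ d, y d ≤ 0) :
    ∃ lam ∈ stdSimplex ℝ D, ∀ y ∈ K, ∑ d, lam d * y d ≤ 0 := by
  classical
  rcases K.eq_empty_or_nonempty with rfl | ⟨k₀, hk₀⟩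
  · exact ⟨_, single_mem_stdSimplex ℝ (Classical.arbitrary D), by simp⟩
  -- separate `K` from the open positive orthant
  have hdisj : Disjoint (Set.univ.pi fun _ => Set.Ioi 0) K := Set.disjoint_left.2
    fun y hyQ hyK =>
      let ⟨d, hd⟩ := hpos y hyK
      (hyQ d (Set.mem_univ d)).not_ge hd
  obtain ⟨f, u, hfQ, hfK⟩ := geometric_hahn_banach_open (convex_pi fun _ _ => convex_Ioi 0)
    (isOpen_set_pi Set.finite_univ fun _ _ => isOpen_Ioi) hK hdisj
  set μ : D → ℝ := fun d => -f (Pi.single d 1)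
  have hf : ∀ y, f y = -∑ d, μ d * y d := by
    intro y
    conv_lhs => rw [← Finset.univ_sum_single y]
    simp only [map_sum, μ, neg_mul, Finset.sum_neg_distrib, neg_neg]
    refine Finset.sum_congr rfl fun d _ => ?_
    rw [mul_comm, ← smul_eq_mul, ← map_smul, ← Pi.single_smul', smul_eq_mul, mul_one]
  have hμ : ∀ d, 0 ≤ μ d := fun d => neg_nonneg.2 (map_single_nonpos_of_forall_pos_lt hfQ d)
  have hsum : 0 < ∑ d, μ d := by
    refine (Finset.sum_nonneg fun d _ => hμ d).lt_of_ne fun h0 => ?_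
    have hμ0 : ∀ d, μ d = 0 := fun d =>
      (Finset.sum_eq_zero_iff_of_nonneg fun d _ => hμ d).1 h0.symm d (Finset.mem_univ d)
    have hK₀ := hfK k₀ hk₀
    have hQ₁ := hfQ 1 fun _ _ => Set.mem_Ioi.2 one_pos
    simp only [hf, hμ0, zero_mul, Finset.sum_const_zero, neg_zero] at hK₀ hQ₁
    linarith
  refine ⟨fun d => μ d / ∑ d', μ d', ⟨fun d => div_nonneg (hμ d) hsum.le, ?_⟩, fun y hy => ?_⟩
  · rw [← Finset.sum_div, div_self hsum.ne']
  · have : ∑ d, μ d * y d ≤ 0 := by linarith [hfK y hy, hf y, nonneg_of_forall_pos_lt hfQ]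
    simp_rw [div_mul_eq_mul_div, ← Finset.sum_div]
    exact div_nonpos_of_nonpos_of_nonneg this hsum.le

theorem Convex.exists_mem_stdSimplex_sum_mul_le {E D : Type*} [AddCommGroup E] [Module ℝ E]
    [Fintype D] [Nonempty D] {C : Set E} (hC : Convex ℝ C) {L : D → E → ℝ}
    (hL : ∀ d, ConcaveOn ℝ C (L d)) {r : ℝ} (h : ∀ x ∈ C, ∃ d, L d x ≤ r) :
    ∃ lam ∈ stdSimplex ℝ D, ∀ x ∈ C, ∑ d, lam d * L d x ≤ r := by
  set K : Set (D → ℝ) := {y | ∃ x ∈ C, ∀ d, y d ≤ L d x - r}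
  have hK : Convex ℝ K := by
    rintro y₁ ⟨x₁, hx₁, hy₁⟩ y₂ ⟨x₂, hx₂, hy₂⟩ a b ha hb hab
    refine ⟨a • x₁ + b • x₂, hC hx₁ hx₂ ha hb hab, fun d => ?_⟩
    have hconc := (hL d).2 hx₁ hx₂ ha hb hab
    simp only [Pi.add_apply, Pi.smul_apply, smul_eq_mul] at hconc ⊢
    have hr : a * r + b * r = r := by rw [← add_mul, hab, one_mul]
    linarith [mul_le_mul_of_nonneg_left (hy₁ d) ha, mul_le_mul_of_nonneg_left (hy₂ d) hb]
  obtain ⟨lam, hlam, hlamK⟩ := hK.exists_mem_stdSimplex_sum_mul_nonpos fun y ⟨x, hx, hy⟩ =>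
    let ⟨d, hd⟩ := h x hx
    ⟨d, by linarith [hy d]⟩
  refine ⟨lam, hlam, fun x hx => ?_⟩
  have := hlamK (fun d => L d x - r) ⟨x, hx, fun _ => le_rfl⟩
  simp only [mul_sub, Finset.sum_sub_distrib, ← Finset.sum_mul, hlam.2, one_mul] at this
  linarith

theorem upperBounds_image_sum_subset {ι X : Type*} [Fintype ι] {f : ι → X → ℝ}
    {Γ₁ Γ₂ : ι → Set X} (h : ∀ i, upperBounds (f i '' Γ₂ i) ⊆ upperBounds (f i '' Γ₁ i)) :
    upperBounds ((fun x : ι → X => ∑ i, f i (x i)) '' {x | ∀ i, x i ∈ Γ₂ i}) ⊆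
      upperBounds ((fun x : ι → X => ∑ i, f i (x i)) '' {x | ∀ i, x i ∈ Γ₁ i}) := by
  classical
  intro r hr
  -- replace the coordinates in `s` by ones from `Γ₁`, one at a time
  suffices ∀ s : Finset ι, ∀ x : ι → X, (∀ i ∈ s, x i ∈ Γ₁ i) → (∀ i ∉ s, x i ∈ Γ₂ i) →
      ∑ i, f i (x i) ≤ r by
    rintro _ ⟨x, hx, rfl⟩
    exact this Finset.univ x (fun i _ => hx i) (by simp)
  intro s
  induction s using Finset.induction_on with
  | empty => exact fun x _ hx => hr ⟨x, fun i => hx i (Finset.notMem_empty i), rfl⟩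
  | insert j s hj ih =>
    intro x hx₁ hx₂
    have hsplit : ∀ y : ι → X, ∑ i, f i (y i) = f j (y j) + ∑ i ∈ Finset.univ.erase j, f i (y i) :=
      fun y => (Finset.add_sum_erase _ _ (Finset.mem_univ j)).symm
    have hrest : r - ∑ i ∈ Finset.univ.erase j, f i (x i) ∈ upperBounds (f j '' Γ₂ j) := by
      rintro _ ⟨β, hβ, rfl⟩
      have := ih (Function.update x j β)
        (fun i hi => by
          rw [Function.update_of_ne (ne_of_mem_of_not_mem hi hj)]
          exact hx₁ i (Finset.mem_insert_of_mem hi))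
        (fun i hi => by
          rcases eq_or_ne i j with rfl | hij
          · simpa using hβ
          · rw [Function.update_of_ne hij]
            exact hx₂ i (by simp [hij, hi]))
      rw [hsplit, Function.update_self, Finset.sum_congr rfl fun i hi => by
        rw [Function.update_of_ne (Finset.ne_of_mem_erase hi)]] at this
      linarith
    have := h j hrest ⟨x j, hx₁ j (Finset.mem_insert_self j s), rfl⟩
    rw [hsplit]
    linarith

end Convexity

section Lineval

variable {S : Type*} [Fintype S]

/-- The support function of `Γ₁` is at most that of `Γ₂` on nonnegative weights; phrased with
upper bounds so that empty or unbounded images carry no junk `sSup`. -/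
def SupportLE (Γ₁ Γ₂ : Set (S → ℝ)) : Prop :=
  ∀ w : S → ℝ, 0 ≤ w →
    upperBounds ((fun α => lineval α w) '' Γ₂) ⊆ upperBounds ((fun α => lineval α w) '' Γ₁)

theorem supportLE_of_sSup_eq {Γ₁ Γ₂ : Set (S → ℝ)} (hne₂ : Γ₂.Nonempty)
    (hbdd₁ : ∀ b ∈ stdSimplex ℝ S, BddAbove ((fun α => lineval α b) '' Γ₁))
    (heq : ∀ b ∈ stdSimplex ℝ S,
      sSup ((fun α => lineval α b) '' Γ₁) = sSup ((fun α => lineval α b) '' Γ₂)) :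
    SupportLE Γ₁ Γ₂ := by
  intro w hw r hr
  rintro _ ⟨α, hα, rfl⟩
  obtain ⟨β, hβ⟩ := hne₂
  rcases (Finset.sum_nonneg fun s _ => hw s).eq_or_lt with hc | hc
  · have hw0 : w = 0 := funext fun s =>
      (Finset.sum_eq_zero_iff_of_nonneg fun s _ => hw s).1 hc.symm s (Finset.mem_univ s)
    subst hw0
    simpa [lineval] using hr ⟨β, hβ, rfl⟩
  set c := ∑ s, w s
  have hb : c⁻¹ • w ∈ stdSimplex ℝ S :=
    ⟨fun s => smul_nonneg (inv_nonneg.2 hc.le) (hw s), by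
      simp [← Finset.mul_sum, c, inv_mul_cancel₀ hc.ne']⟩
  have hscale : ∀ α, lineval α w = c * lineval α (c⁻¹ • w) := fun α => by
    simp [lineval, Finset.mul_sum, ← mul_assoc, mul_inv_cancel₀ hc.ne']
  have hsup : sSup ((fun α => lineval α (c⁻¹ • w)) '' Γ₂) ≤ r / c := by
    refine csSup_le ⟨_, β, hβ, rfl⟩ ?_
    rintro _ ⟨β', hβ', rfl⟩
    rw [le_div_iff₀ hc, mul_comm, ← hscale]
    exact hr ⟨β', hβ', rfl⟩
  have hα' := le_csSup (hbdd₁ _ hb) ⟨α, hα, rfl⟩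
  rw [heq _ hb] at hα'
  have := (le_div_iff₀ hc).1 (hα'.trans hsup)
  simpa [hscale, mul_comm] using this

end Lineval

section NonnegAffine

variable {ι κ S : Type*} [Fintype ι] [Fintype κ] [Fintype S]

def IsNonnegAffine (F : (ι → κ → S → ℝ) → ℝ) : Prop :=
  ∃ (c : ℝ) (w : ι → κ → S → ℝ), 0 ≤ w ∧ ∀ x, F x = c + ∑ i, ∑ k, lineval (x i k) (w i k)

theorem IsNonnegAffine.sum_mul {J : Type*} [Fintype J] {F : J → (ι → κ → S → ℝ) → ℝ}
    (hF : ∀ j, IsNonnegAffine (F j)) {μ : J → ℝ} (hμ : 0 ≤ μ) :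
    IsNonnegAffine fun x => ∑ j, μ j * F j x := by
  choose c w hw hFw using hF
  refine ⟨∑ j, μ j * c j, ∑ j, μ j • w j,
    fun i k s => by simpa using Finset.sum_nonneg fun j _ => mul_nonneg (hμ j) (hw j i k s),
    fun x => ?_⟩
  simp only [hFw, lineval, mul_add, Finset.sum_add_distrib, Finset.mul_sum, Finset.sum_apply,
    Pi.smul_apply, smul_eq_mul, Finset.sum_mul]
  congr 1
  rw [Finset.sum_comm]
  refine Finset.sum_congr rfl fun i _ => ?_
  rw [Finset.sum_comm]
  refine Finset.sum_congr rfl fun k _ => ?_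
  rw [Finset.sum_comm]
  exact Finset.sum_congr rfl fun s _ => Finset.sum_congr rfl fun j _ => by ring

theorem IsNonnegAffine.concaveOn {F : (ι → κ → S → ℝ) → ℝ} (hF : IsNonnegAffine F)
    {C : Set (ι → κ → S → ℝ)} (hC : Convex ℝ C) : ConcaveOn ℝ C F := by
  obtain ⟨c, w, -, hFw⟩ := hF
  refine ⟨hC, fun x _ y _ a b _ _ hab => le_of_eq ?_⟩
  simp only [hFw, lineval, Pi.add_apply, Pi.smul_apply, smul_eq_mul, mul_add, Finset.mul_sum,
    Finset.sum_add_distrib, mul_left_comm a, mul_left_comm b]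
  linear_combination c * hab

theorem IsNonnegAffine.upperBounds_image_subset {F : (ι → κ → S → ℝ) → ℝ}
    (hF : IsNonnegAffine F) {Γ₁ Γ₂ : Set (S → ℝ)} (hΓ : SupportLE Γ₁ Γ₂) :
    upperBounds (F '' {x | ∀ i k, x i k ∈ Γ₂}) ⊆ upperBounds (F '' {x | ∀ i k, x i k ∈ Γ₁}) := by
  obtain ⟨c, w, hw, hFw⟩ := hF
  intro r hr
  rintro _ ⟨x, hx, rfl⟩
  have hlin := upperBounds_image_sum_subset
    (f := fun i (y : κ → S → ℝ) => ∑ k, lineval (y k) (w i k))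
    (Γ₁ := fun _ => {y | ∀ k, y k ∈ Γ₁}) (Γ₂ := fun _ => {y | ∀ k, y k ∈ Γ₂})
    (fun i => upperBounds_image_sum_subset fun k => hΓ (w i k) (hw i k))
  have hrc : r - c ∈ upperBounds ((fun x : ι → κ → S → ℝ => ∑ i, ∑ k, lineval (x i k) (w i k)) ''
      {x | ∀ i, x i ∈ {y | ∀ k, y k ∈ Γ₂}}) := by
    rintro _ ⟨y, hy, rfl⟩
    have := hr ⟨y, hy, rfl⟩
    rw [hFw] at this
    simp only
    linarith
  have := hlin hrc ⟨x, hx, rfl⟩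
  rw [hFw]
  simp only at this
  linarith

end NonnegAffine

namespace OSPOSG

variable {S A1 A2 O : Type*} [Fintype S] [Fintype A1] [Fintype A2] [Fintype O]
  (G : OSPOSG S A1 A2 O)

/-- `G.valcompVert π1 x s` is, by definition, the minimum of `G.stagePayoff π1 x s` over
player 2's actions. -/
def stagePayoff (π1 : A1 → ℝ) (x : A1 → O → S → ℝ) (s : S) (a2 : A2) : ℝ :=
  ∑ a1, π1 a1 * (G.R s a1 a2 + G.γ * ∑ o, ∑ s', G.T s a1 a2 o s' * x a1 o s')

theorem isNonnegAffine_stagePayoff {π1 : A1 → ℝ} (hπ1 : 0 ≤ π1) (s : S) (a2 : A2) :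
    IsNonnegAffine fun x => G.stagePayoff π1 x s a2 := by
  refine ⟨∑ a1, π1 a1 * G.R s a1 a2, fun a1 o s' => π1 a1 * G.γ * G.T s a1 a2 o s',
    fun a1 o s' => mul_nonneg (mul_nonneg (hπ1 a1) G.γ_pos.le) (G.T_nonneg s a1 a2 o s'),
    fun x => ?_⟩
  simp only [stagePayoff, lineval, mul_add, Finset.sum_add_distrib, Finset.mul_sum]
  congr 1
  exact Finset.sum_congr rfl fun a1 _ => Finset.sum_congr rfl fun o _ =>
    Finset.sum_congr rfl fun s' _ => by ring

def pureValue (π1 : A1 → ℝ) (x : A1 → O → S → ℝ) (b : S → ℝ) (d : S → A2) : ℝ :=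
  ∑ s, b s * G.stagePayoff π1 x s (d s)

theorem isNonnegAffine_pureValue {π1 : A1 → ℝ} (hπ1 : 0 ≤ π1) {b : S → ℝ} (hb : 0 ≤ b)
    (d : S → A2) : IsNonnegAffine fun x => G.pureValue π1 x b d :=
  IsNonnegAffine.sum_mul (fun s => G.isNonnegAffine_stagePayoff hπ1 s (d s)) hb

variable [Nonempty A2]

theorem valcomp_le_pureValue {b : S → ℝ} (hb : 0 ≤ b) (π1 : A1 → ℝ) (x : A1 → O → S → ℝ)
    (d : S → A2) : G.valcomp π1 x b ≤ G.pureValue π1 x b d :=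
  Finset.sum_le_sum fun s _ =>
    mul_le_mul_of_nonneg_left (Finset.inf'_le _ (Finset.mem_univ (d s))) (hb s)

theorem exists_pureValue_eq_valcomp (π1 : A1 → ℝ) (x : A1 → O → S → ℝ) (b : S → ℝ) :
    ∃ d, G.pureValue π1 x b d = G.valcomp π1 x b := by
  choose d _ hd using fun s =>
    Finset.exists_mem_eq_inf' Finset.univ_nonempty (G.stagePayoff π1 x s)
  exact ⟨d, Finset.sum_congr rfl fun s _ => by rw [← hd s]; rfl⟩

theorem upperBounds_valcomp_image_subset {π1 : A1 → ℝ} (hπ1 : 0 ≤ π1) {b : S → ℝ}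
    (hb : 0 ≤ b) {Γ₁ Γ₂ : Set (S → ℝ)} (hconv₂ : Convex ℝ Γ₂) (hΓ : SupportLE Γ₁ Γ₂) :
    upperBounds ((fun x => G.valcomp π1 x b) '' {x | ∀ a1 o, x a1 o ∈ Γ₂}) ⊆
      upperBounds ((fun x => G.valcomp π1 x b) '' {x | ∀ a1 o, x a1 o ∈ Γ₁}) := by
  classical
  intro r hr
  have hC : Convex ℝ {x : A1 → O → S → ℝ | ∀ a1 o, x a1 o ∈ Γ₂} :=
    fun x hx y hy p q hp hq hpq a1 o => hconv₂ (hx a1 o) (hy a1 o) hp hq hpq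
  -- minimax: one fixed mixture of player 2's pure strategies does as well as their minimum
  obtain ⟨lam, hlam, hlamr⟩ := hC.exists_mem_stdSimplex_sum_mul_le
    (L := fun d x => G.pureValue π1 x b d)
    (fun d => (G.isNonnegAffine_pureValue hπ1 hb d).concaveOn hC)
    fun x hx =>
      let ⟨d, hd⟩ := G.exists_pureValue_eq_valcomp π1 x b
      ⟨d, hd.trans_le (hr ⟨x, hx, rfl⟩)⟩
  have hmix := (IsNonnegAffine.sum_mul (G.isNonnegAffine_pureValue hπ1 hb) hlam.1
    ).upperBounds_image_subset hΓ (by rintro _ ⟨x, hx, rfl⟩; exact hlamr x hx)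
  rintro _ ⟨x, hx, rfl⟩
  calc G.valcomp π1 x b = ∑ d, lam d * G.valcomp π1 x b := by
        rw [← Finset.sum_mul, hlam.2, one_mul]
    _ ≤ ∑ d, lam d * G.pureValue π1 x b d := Finset.sum_le_sum fun d _ =>
        mul_le_mul_of_nonneg_left (G.valcomp_le_pureValue hb π1 x d) (hlam.1 d)
    _ ≤ r := hmix ⟨x, hx, rfl⟩

theorem upperBounds_valcompSet_subset {Γ₁ Γ₂ : Set (S → ℝ)} (hconv₂ : Convex ℝ Γ₂)
    (hΓ : SupportLE Γ₁ Γ₂) {b : S → ℝ} (hb : 0 ≤ b) :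
    upperBounds {y : ℝ | ∃ π1 ∈ stdSimplex ℝ A1, ∃ αb : A1 → O → S → ℝ,
        (∀ a1 o, αb a1 o ∈ Γ₂) ∧ y = G.valcomp π1 αb b} ⊆
      upperBounds {y : ℝ | ∃ π1 ∈ stdSimplex ℝ A1, ∃ αb : A1 → O → S → ℝ,
        (∀ a1 o, αb a1 o ∈ Γ₁) ∧ y = G.valcomp π1 αb b} := by
  intro r hr
  rintro _ ⟨π1, hπ1, αb, hαb, rfl⟩
  exact G.upperBounds_valcomp_image_subset hπ1.1 hb hconv₂ hΓ
    (by rintro _ ⟨x, hx, rfl⟩; exact hr ⟨π1, hπ1, x, hx, rfl⟩) ⟨αb, hαb, rfl⟩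

end OSPOSG

namespace OSPOSG

variable {S A1 A2 O : Type*} [Fintype S] [Fintype A1] [Fintype A2] [Fintype O]
  [Nonempty S] [Nonempty A1] [Nonempty A2] [Nonempty O]

/-- The max-composition operator `H` does not depend on the convex set of linear functions
chosen to represent the value function. -/
theorem maxComposition_representation_independent (G : OSPOSG S A1 A2 O)
    (Γ₁ Γ₂ : Set (S → ℝ)) (hne1 : Γ₁.Nonempty) (hne2 : Γ₂.Nonempty)
    (hconv1 : Convex ℝ Γ₁) (hconv2 : Convex ℝ Γ₂)
    (hbdd1 : ∀ b ∈ stdSimplex ℝ S, BddAbove ((fun α => lineval α b) '' Γ₁))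
    (hbdd2 : ∀ b ∈ stdSimplex ℝ S, BddAbove ((fun α => lineval α b) '' Γ₂))
    (heq : ∀ b ∈ stdSimplex ℝ S,
      sSup ((fun α => lineval α b) '' Γ₁) = sSup ((fun α => lineval α b) '' Γ₂))
    (b : S → ℝ) (hb : b ∈ stdSimplex ℝ S) :
    sSup {y : ℝ | ∃ π1 ∈ stdSimplex ℝ A1, ∃ αb : A1 → O → S → ℝ,
        (∀ a1 o, αb a1 o ∈ Γ₁) ∧ y = G.valcomp π1 αb b} =
      sSup {y : ℝ | ∃ π1 ∈ stdSimplex ℝ A1, ∃ αb : A1 → O → S → ℝ,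
        (∀ a1 o, αb a1 o ∈ Γ₂) ∧ y = G.valcomp π1 αb b} := by
  classical
  have hne : ∀ Γ : Set (S → ℝ), Γ.Nonempty → {y : ℝ | ∃ π1 ∈ stdSimplex ℝ A1,
      ∃ αb : A1 → O → S → ℝ, (∀ a1 o, αb a1 o ∈ Γ) ∧ y = G.valcomp π1 αb b}.Nonempty :=
    fun Γ ⟨α, hα⟩ => ⟨_, _, single_mem_stdSimplex ℝ (Classical.arbitrary A1), fun _ _ => α,
      fun _ _ => hα, rfl⟩
  refine csSup_eq_csSup_of_upperBounds_eq (hne Γ₁ hne1) (hne Γ₂ hne2) (subset_antisymm ?_ ?_)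
  · exact G.upperBounds_valcompSet_subset hconv1
      (supportLE_of_sSup_eq hne1 hbdd2 fun b' hb' => (heq b' hb').symm) hb.1
  · exact G.upperBounds_valcompSet_subset hconv2 (supportLE_of_sSup_eq hne2 hbdd1 heq) hb.1

end OSPOSG
end
end

section
/- Let G be a one-sided POSG, let V, W : Δ(S) → ℝ be convex continuous functions, and let b ∈ Δ(S) be such that [HV](b) ≤ [HW](b), where H is the minimax operator. Let (π1^V, π2^V) be a Nash equilibrium of the stage game with payoff u^{V,b}, i.e. u^{V,b}(π1, π2^V) ≤ u^{V,b}(π1^V, π2^V) ≤ u^{V,b}(π1^V, π2) for all π1 ∈ Π1 and π2 ∈ Π2, and likewise let (π1^W, π2^W) be a Nash equilibrium of the stage game with payoff u^{W,b}. Let C ≥ 0. If W(τ(b, a1, π2^V, o)) − V(τ(b, a1, π2^V, o)) ≤ C for every action a1 ∈ A1 with π1^W(a1) > 0 and every observation o ∈ O with Pr_{b,π1^W,π2^V}[a1, o] > 0, then [HW](b) − [HV](b) ≤ γC. -/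
open scoped BigOperators

noncomputable section

/-!
Compare both operators through the stage game in which player 1 plays `π1W` and player 2
plays `π2V`. The saddle-point inequalities give `[HW](b) ≤ u^W(π1W, π2W) ≤ u^W(π1W, π2V)` and
`u^V(π1W, π2V) ≤ u^V(π1V, π2V) ≤ [HV](b)`. The two middle utilities share both strategies, so
they have the same immediate reward and the same distribution of updated beliefs. Their
difference is therefore `γ` times the expected gap `W - V` at the updated belief, which is at
most `γC`. The first step needs the infima defining `[HW](b)` to be bounded below (otherwise
they take the junk value `0`); this holds because `W` is bounded on the compact simplex.
-/

section SaddlePoint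

variable {α β : Type*}

theorem le_ciSup_ciInf_of_saddle [Nonempty β] {f : α → β → ℝ} {x₀ : α} {y₀ : β}
    (hx : ∀ x, f x y₀ ≤ f x₀ y₀) (hy : ∀ y, f x₀ y₀ ≤ f x₀ y) :
    f x₀ y₀ ≤ ⨆ x, ⨅ y, f x y := by
  have hbdd : BddAbove (Set.range fun x => ⨅ y, f x y) := by
    refine ⟨max (f x₀ y₀) 0, ?_⟩
    rintro _ ⟨x, rfl⟩
    by_cases hx' : BddBelow (Set.range (f x))
    · exact ((ciInf_le hx' y₀).trans (hx x)).trans (le_max_left _ _)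
    · -- an infimum of reals that is unbounded below is `0`
      simp only [Real.iInf_of_not_bddBelow hx']
      exact le_max_right _ _
  exact (le_ciInf hy).trans (le_ciSup hbdd x₀)

theorem ciSup_ciInf_le_of_forall_le [Nonempty α] {f : α → β → ℝ} {y₀ : β} {c : ℝ}
    (hbdd : ∀ x, BddBelow (Set.range (f x))) (hx : ∀ x, f x y₀ ≤ c) :
    ⨆ x, ⨅ y, f x y ≤ c :=
  ciSup_le fun x => (ciInf_le (hbdd x) y₀).trans (hx x)

end SaddlePoint

namespace OSPOSG

variable {S A1 A2 O : Type*} [Fintype S] [Fintype A1] [Fintype A2] [Fintype O]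

instance [Nonempty A2] : Nonempty (Pi2 S A2) :=
  let p := Classical.arbitrary (stdSimplex ℝ A2)
  ⟨⟨fun _ => p, fun _ => p.2⟩⟩

variable (G : OSPOSG S A1 A2 O) {b : S → ℝ} {π1 : A1 → ℝ} {π2 : S → A2 → ℝ}

theorem sum_Pr (hb : b ∈ stdSimplex ℝ S) (hπ2 : π2 ∈ Pi2 S A2) (a1 : A1) :
    ∑ o, G.Pr b π1 π2 a1 o = π1 a1 :=
  calc ∑ o, G.Pr b π1 π2 a1 o
      = ∑ s, ∑ a2, b s * π1 a1 * π2 s a2 * ∑ o, ∑ s', G.T s a1 a2 o s' := by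
        simp only [Pr, Finset.mul_sum]
        rw [Finset.sum_comm]
        exact Finset.sum_congr rfl fun s _ => Finset.sum_comm
    _ = π1 a1 := by
        simp only [G.T_sum, mul_one, mul_right_comm (b _) (π1 a1), ← Finset.mul_sum, (hπ2 _).2,
          ← Finset.sum_mul, hb.2, one_mul]

theorem sum_sum_Pr (hb : b ∈ stdSimplex ℝ S) (hπ1 : π1 ∈ stdSimplex ℝ A1)
    (hπ2 : π2 ∈ Pi2 S A2) : ∑ a1, ∑ o, G.Pr b π1 π2 a1 o = 1 := by
  simp only [G.sum_Pr hb hπ2, hπ1.2]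

theorem sum_joint_prob_eq_one (hb : b ∈ stdSimplex ℝ S) (hπ1 : π1 ∈ stdSimplex ℝ A1)
    (hπ2 : π2 ∈ Pi2 S A2) : ∑ s, ∑ a1, ∑ a2, b s * π1 a1 * π2 s a2 = 1 := by
  simp only [← Finset.mul_sum, (hπ2 _).2, hπ1.2, mul_one, hb.2]

theorem Pr_nonneg (hb : b ∈ stdSimplex ℝ S) (hπ1 : π1 ∈ stdSimplex ℝ A1)
    (hπ2 : π2 ∈ Pi2 S A2) (a1 : A1) (o : O) : 0 ≤ G.Pr b π1 π2 a1 o :=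
  Finset.sum_nonneg fun s _ => Finset.sum_nonneg fun a2 _ => Finset.sum_nonneg fun _ _ =>
    mul_nonneg (mul_nonneg (mul_nonneg (hb.1 s) (hπ1.1 a1)) ((hπ2 s).1 a2)) (G.T_nonneg ..)

theorem pos_of_Pr_pos (hπ1 : π1 ∈ stdSimplex ℝ A1) {a1 : A1} {o : O}
    (h : 0 < G.Pr b π1 π2 a1 o) : 0 < π1 a1 :=
  (hπ1.1 a1).lt_of_ne fun h0 => h.ne' (by simp [Pr, ← h0])

theorem beliefUpd_mem_insert_zero_stdSimplex (hb : b ∈ stdSimplex ℝ S) (hπ2 : π2 ∈ Pi2 S A2)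
    (a1 : A1) (o : O) : G.beliefUpd b a1 π2 o ∈ insert 0 (stdSimplex ℝ S) := by
  set d := ∑ s'', ∑ s, ∑ a2, b s * π2 s a2 * G.T s a1 a2 o s''
  have hnum : ∀ s', 0 ≤ ∑ s, ∑ a2, b s * π2 s a2 * G.T s a1 a2 o s' := fun s' =>
    Finset.sum_nonneg fun s _ => Finset.sum_nonneg fun a2 _ =>
      mul_nonneg (mul_nonneg (hb.1 s) ((hπ2 s).1 a2)) (G.T_nonneg ..)
  rcases (Finset.sum_nonneg fun s' _ => hnum s' : 0 ≤ d).eq_or_lt with hd | hd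
  · left
    funext s'
    simp [beliefUpd, ← hd]
  · right
    refine ⟨fun s' => div_nonneg (hnum s') hd.le, ?_⟩
    simp only [beliefUpd, ← Finset.sum_div]
    exact div_self hd.ne'

theorem stageU_sub_stageU (V W : (S → ℝ) → ℝ) (b : S → ℝ) (π1 : A1 → ℝ)
    (π2 : S → A2 → ℝ) :
    G.stageU W b π1 π2 - G.stageU V b π1 π2 =
      G.γ * ∑ a1, ∑ o, G.Pr b π1 π2 a1 o *
        (W (G.beliefUpd b a1 π2 o) - V (G.beliefUpd b a1 π2 o)) := by
  simp only [stageU, mul_sub, Finset.sum_sub_distrib]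
  ring

theorem sum_sum_Pr_mul_le (hb : b ∈ stdSimplex ℝ S) (hπ1 : π1 ∈ stdSimplex ℝ A1)
    (hπ2 : π2 ∈ Pi2 S A2) {g : A1 → O → ℝ} {C : ℝ}
    (hg : ∀ a1 o, 0 < G.Pr b π1 π2 a1 o → g a1 o ≤ C) :
    ∑ a1, ∑ o, G.Pr b π1 π2 a1 o * g a1 o ≤ C := by
  calc ∑ a1, ∑ o, G.Pr b π1 π2 a1 o * g a1 o
      ≤ ∑ a1, ∑ o, G.Pr b π1 π2 a1 o * C := by
        refine Finset.sum_le_sum fun a1 _ => Finset.sum_le_sum fun o _ => ?_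
        rcases (G.Pr_nonneg hb hπ1 hπ2 a1 o).eq_or_lt with h0 | hpos
        · simp [← h0]
        · exact mul_le_mul_of_nonneg_left (hg a1 o hpos) hpos.le
    _ = C := by simp only [← Finset.sum_mul, G.sum_sum_Pr hb hπ1 hπ2, one_mul]

section Bounds

variable [Nonempty S] [Nonempty A1] [Nonempty A2]

theorem rmin_le_R (s : S) (a1 : A1) (a2 : A2) : G.rmin ≤ G.R s a1 a2 :=
  Finset.inf'_le (fun x : S × A1 × A2 => G.R x.1 x.2.1 x.2.2) (Finset.mem_univ (s, a1, a2))

theorem rmin_add_mul_le_stageU (V : (S → ℝ) → ℝ) (hb : b ∈ stdSimplex ℝ S)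
    (hπ1 : π1 ∈ stdSimplex ℝ A1) (hπ2 : π2 ∈ Pi2 S A2) {m : ℝ}
    (hm : ∀ a1 o, m ≤ V (G.beliefUpd b a1 π2 o)) :
    G.rmin + G.γ * m ≤ G.stageU V b π1 π2 := by
  have hreward : G.rmin ≤ ∑ s, ∑ a1, ∑ a2, b s * π1 a1 * π2 s a2 * G.R s a1 a2 :=
    calc G.rmin = ∑ s, ∑ a1, ∑ a2, b s * π1 a1 * π2 s a2 * G.rmin := by
          simp only [← Finset.sum_mul, sum_joint_prob_eq_one hb hπ1 hπ2, one_mul]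
      _ ≤ _ := Finset.sum_le_sum fun s _ => Finset.sum_le_sum fun a1 _ =>
          Finset.sum_le_sum fun a2 _ => mul_le_mul_of_nonneg_left (G.rmin_le_R s a1 a2)
            (mul_nonneg (mul_nonneg (hb.1 s) (hπ1.1 a1)) ((hπ2 s).1 a2))
  have hcont : m ≤ ∑ a1, ∑ o, G.Pr b π1 π2 a1 o * V (G.beliefUpd b a1 π2 o) :=
    calc m = ∑ a1, ∑ o, G.Pr b π1 π2 a1 o * m := by
          simp only [← Finset.sum_mul, G.sum_sum_Pr hb hπ1 hπ2, one_mul]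
      _ ≤ _ := Finset.sum_le_sum fun a1 _ => Finset.sum_le_sum fun o _ =>
          mul_le_mul_of_nonneg_left (hm a1 o) (G.Pr_nonneg hb hπ1 hπ2 a1 o)
  exact add_le_add hreward (mul_le_mul_of_nonneg_left hcont G.γ_pos.le)

theorem bddBelow_range_stageU {V : (S → ℝ) → ℝ} (hV : ContinuousOn V (stdSimplex ℝ S))
    (hb : b ∈ stdSimplex ℝ S) (hπ1 : π1 ∈ stdSimplex ℝ A1) :
    BddBelow (Set.range fun π2 : Pi2 S A2 => G.stageU V b π1 π2) := by
  obtain ⟨m, hm⟩ : BddBelow (V '' insert 0 (stdSimplex ℝ S)) := by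
    rw [Set.image_insert_eq]
    exact ((isCompact_stdSimplex ℝ S).bddBelow_image hV).insert _
  refine ⟨G.rmin + G.γ * m, ?_⟩
  rintro _ ⟨⟨π2, hπ2⟩, rfl⟩
  exact G.rmin_add_mul_le_stageU V hb hπ1 hπ2 fun a1 o =>
    hm (Set.mem_image_of_mem V (G.beliefUpd_mem_insert_zero_stdSimplex hb hπ2 a1 o))

theorem Hop_le_stageU {V : (S → ℝ) → ℝ} (hV : ContinuousOn V (stdSimplex ℝ S))
    (hb : b ∈ stdSimplex ℝ S) (hπ2 : π2 ∈ Pi2 S A2)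
    (hNash : ∀ π1' ∈ stdSimplex ℝ A1, G.stageU V b π1' π2 ≤ G.stageU V b π1 π2) :
    G.Hop V b ≤ G.stageU V b π1 π2 :=
  ciSup_ciInf_le_of_forall_le (y₀ := (⟨π2, hπ2⟩ : Pi2 S A2))
    (fun π1' => G.bddBelow_range_stageU hV hb π1'.2) fun π1' => hNash π1' π1'.2

end Bounds

theorem stageU_le_Hop [Nonempty A2] {V : (S → ℝ) → ℝ} (hπ1 : π1 ∈ stdSimplex ℝ A1)
    (hπ2 : π2 ∈ Pi2 S A2)
    (hNash1 : ∀ π1' ∈ stdSimplex ℝ A1, G.stageU V b π1' π2 ≤ G.stageU V b π1 π2)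
    (hNash2 : ∀ π2' ∈ Pi2 S A2, G.stageU V b π1 π2 ≤ G.stageU V b π1 π2') :
    G.stageU V b π1 π2 ≤ G.Hop V b :=
  le_ciSup_ciInf_of_saddle
    (f := fun (π1' : stdSimplex ℝ A1) (π2' : Pi2 S A2) => G.stageU V b π1' π2')
    (x₀ := ⟨π1, hπ1⟩) (y₀ := ⟨π2, hπ2⟩) (fun π1' => hNash1 π1' π1'.2)
    fun π2' => hNash2 π2' π2'.2

end OSPOSG

namespace OSPOSG

variable {S A1 A2 O : Type*} [Fintype S] [Fintype A1] [Fintype A2] [Fintype O]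
  [Nonempty S] [Nonempty A1] [Nonempty A2] [Nonempty O]

theorem pointwise_contractivity_general (G : OSPOSG S A1 A2 O)
    (V W : (S → ℝ) → ℝ)
    (hWcont : ContinuousOn W (stdSimplex ℝ S))
    (b : S → ℝ) (hb : b ∈ stdSimplex ℝ S)
    (π1V : A1 → ℝ) (hπ1V : π1V ∈ stdSimplex ℝ A1)
    (π2V : S → A2 → ℝ) (hπ2V : π2V ∈ Pi2 S A2)
    (hNashV1 : ∀ π1 ∈ stdSimplex ℝ A1, G.stageU V b π1 π2V ≤ G.stageU V b π1V π2V)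
    (hNashV2 : ∀ π2 ∈ Pi2 S A2, G.stageU V b π1V π2V ≤ G.stageU V b π1V π2)
    (π1W : A1 → ℝ) (hπ1W : π1W ∈ stdSimplex ℝ A1)
    (π2W : S → A2 → ℝ) (hπ2W : π2W ∈ Pi2 S A2)
    (hNashW1 : ∀ π1 ∈ stdSimplex ℝ A1, G.stageU W b π1 π2W ≤ G.stageU W b π1W π2W)
    (hNashW2 : ∀ π2 ∈ Pi2 S A2, G.stageU W b π1W π2W ≤ G.stageU W b π1W π2)
    (C : ℝ)
    (hgap : ∀ a1 : A1, 0 < π1W a1 → ∀ o : O, 0 < G.Pr b π1W π2V a1 o →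
      W (G.beliefUpd b a1 π2V o) - V (G.beliefUpd b a1 π2V o) ≤ C) :
    G.Hop W b - G.Hop V b ≤ G.γ * C := by
  have hW : G.Hop W b ≤ G.stageU W b π1W π2W := G.Hop_le_stageU hWcont hb hπ2W hNashW1
  have hV : G.stageU V b π1V π2V ≤ G.Hop V b := G.stageU_le_Hop hπ1V hπ2V hNashV1 hNashV2
  have hdeviate : G.stageU W b π1W π2V - G.stageU V b π1W π2V ≤ G.γ * C := by
    rw [stageU_sub_stageU]
    refine mul_le_mul_of_nonneg_left ?_ G.γ_pos.le
    exact G.sum_sum_Pr_mul_le hb hπ1W hπ2V fun a1 o hpos =>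
      hgap a1 (G.pos_of_Pr_pos hπ1W hpos) o hpos
  linarith [hNashW2 π2V hπ2V, hNashV1 π1W hπ1W]

/-- Pointwise contractivity criterion: if `(π1V, π2V)` and `(π1W, π2W)` are Nash equilibria
of the stage games `[HV](b)` and `[HW](b)`, `[HV](b) ≤ [HW](b)`, and the gap `W - V` at
every updated belief reached with positive probability under `(π1W, π2V)` is at most `C`,
then `[HW](b) - [HV](b) ≤ γC`. -/
theorem pointwise_contractivity (G : OSPOSG S A1 A2 O)
    (V W : (S → ℝ) → ℝ)
    (hVconv : ConvexOn ℝ (stdSimplex ℝ S) V) (hVcont : ContinuousOn V (stdSimplex ℝ S))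
    (hWconv : ConvexOn ℝ (stdSimplex ℝ S) W) (hWcont : ContinuousOn W (stdSimplex ℝ S))
    (b : S → ℝ) (hb : b ∈ stdSimplex ℝ S)
    (hHle : G.Hop V b ≤ G.Hop W b)
    (π1V : A1 → ℝ) (hπ1V : π1V ∈ stdSimplex ℝ A1)
    (π2V : S → A2 → ℝ) (hπ2V : π2V ∈ Pi2 S A2)
    (hNashV1 : ∀ π1 ∈ stdSimplex ℝ A1, G.stageU V b π1 π2V ≤ G.stageU V b π1V π2V)
    (hNashV2 : ∀ π2 ∈ Pi2 S A2, G.stageU V b π1V π2V ≤ G.stageU V b π1V π2)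
    (π1W : A1 → ℝ) (hπ1W : π1W ∈ stdSimplex ℝ A1)
    (π2W : S → A2 → ℝ) (hπ2W : π2W ∈ Pi2 S A2)
    (hNashW1 : ∀ π1 ∈ stdSimplex ℝ A1, G.stageU W b π1 π2W ≤ G.stageU W b π1W π2W)
    (hNashW2 : ∀ π2 ∈ Pi2 S A2, G.stageU W b π1W π2W ≤ G.stageU W b π1W π2)
    (C : ℝ) (hC : 0 ≤ C)
    (hgap : ∀ a1 : A1, 0 < π1W a1 → ∀ o : O, 0 < G.Pr b π1W π2V a1 o →
      W (G.beliefUpd b a1 π2V o) - V (G.beliefUpd b a1 π2V o) ≤ C) :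
    G.Hop W b - G.Hop V b ≤ G.γ * C :=
  pointwise_contractivity_general G V W hWcont b hb π1V hπ1V π2V hπ2V hNashV1 hNashV2 π1W hπ1W π2W
    hπ2W hNashW1 hNashW2 C hgap

end OSPOSG
end
end
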